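/- arXiv:0707.0027 — 3 statements merged into one kernel-verified Lean document; each statement's English description precedes it below -/
import Mathlib

section
/- First variation of the augmented kinematic cost functional: Let C : ℝⁿ × ℝⁿ → ℝ be C² with ∂C/∂u^σ = 0 for all σ ∈ {1,…,m} (C depends only on the unconstrained quasi-velocities), and let μ_σ : [a,b] → ℝ be C¹ multipliers. For a proper C² variation q(s,t) define I(s) = ∫_a^b [ C(q(s,t), u(s,t)) + μ_σ(t) u^σ(s,t) ] dt. Then I'(0) = ∫_a^b { (∂C/∂q^j Φ^j_i + (∂C/∂u^I) γ^I_{si} u^s + μ_σ γ^σ_{si} u^s) δθ^i − (d/dt ∂C/∂u^I) δθ^I − μ̇_σ δθ^σ } dt, where all quantities are evaluated along the base curve s = 0, s is summed over 1,…,n, I over m+1,…,n, and σ over 1,…,m. -/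
open Matrix Real Finset

noncomputable section

/-- Partial derivative of `f : ℝⁿ → ℝ` at `x` in the `j`-th coordinate direction. -/
def pder {n : ℕ} (f : (Fin n → ℝ) → ℝ) (x : Fin n → ℝ) (j : Fin n) : ℝ :=
  fderiv ℝ f x (Pi.single j 1)

/-- Hamel coefficients `γ^s_{pq}(x) = (∂Ψ^s_i/∂x^j − ∂Ψ^s_j/∂x^i) Φ^i_p Φ^j_q`. -/
def hamel {n : ℕ} (Ψ Φ : (Fin n → ℝ) → Matrix (Fin n) (Fin n) ℝ)
    (x : Fin n → ℝ) (s p r : Fin n) : ℝ :=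
  ∑ i, ∑ j, (pder (fun y => Ψ y s i) x j - pder (fun y => Ψ y s j) x i) * Φ x i p * Φ x j r

/-- Quasi-velocities `u^j(s,t) = Ψ^j_i(q(s,t)) ∂q^i/∂t` of a variation `q`. -/
def qvel {n : ℕ} (Ψ : (Fin n → ℝ) → Matrix (Fin n) (Fin n) ℝ)
    (q : ℝ → ℝ → Fin n → ℝ) (s t : ℝ) : Fin n → ℝ :=
  fun j => ∑ i, Ψ (q s t) j i * deriv (fun t' => q s t' i) t

/-- Quasi-coordinate variations `δθ^j(s,t) = Ψ^j_i(q(s,t)) ∂q^i/∂s` of a variation `q`. -/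
def qvar {n : ℕ} (Ψ : (Fin n → ℝ) → Matrix (Fin n) (Fin n) ℝ)
    (q : ℝ → ℝ → Fin n → ℝ) (s t : ℝ) : Fin n → ℝ :=
  fun j => ∑ i, Ψ (q s t) j i * deriv (fun s' => q s' t i) s

private lemma hasDerivAt_slice_left {g : ℝ × ℝ → ℝ} {s t : ℝ}
    (hg : DifferentiableAt ℝ g (s, t)) :
    HasDerivAt (fun x => g (x, t)) (fderiv ℝ g (s, t) (1, 0)) s := by
  have h1 : HasDerivAt (fun x : ℝ => (x, t)) ((1 : ℝ), (0 : ℝ)) s :=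
    (hasDerivAt_id s).prodMk (hasDerivAt_const s t)
  exact hg.hasFDerivAt.comp_hasDerivAt s h1

private lemma hasDerivAt_slice_right {g : ℝ × ℝ → ℝ} {s t : ℝ}
    (hg : DifferentiableAt ℝ g (s, t)) :
    HasDerivAt (fun x => g (s, x)) (fderiv ℝ g (s, t) (0, 1)) t := by
  have h1 : HasDerivAt (fun x : ℝ => (s, x)) ((0 : ℝ), (1 : ℝ)) t :=
    (hasDerivAt_const t s).prodMk (hasDerivAt_id t)
  exact hg.hasFDerivAt.comp_hasDerivAt t h1

private lemma fderiv_eq_sum_pder {n : ℕ} {h : (Fin n → ℝ) → ℝ} {x : Fin n → ℝ}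
    (hh : DifferentiableAt ℝ h x) (w : Fin n → ℝ) :
    fderiv ℝ h x w = ∑ k, w k * pder h x k := by
  have hw : w = ∑ k, w k • (Pi.single k (1:ℝ) : Fin n → ℝ) := by
    funext j
    simp [Finset.sum_apply, Pi.single_apply, mul_comm]
  calc fderiv ℝ h x w = fderiv ℝ h x (∑ k, w k • (Pi.single k (1:ℝ) : Fin n → ℝ)) := by rw [← hw]
    _ = ∑ k, w k * pder h x k := by
        rw [map_sum]
        exact Finset.sum_congr rfl fun k _ => by rw [_root_.map_smul]; rfl

private lemma fderiv_fst_slice {n : ℕ} {g : (Fin n → ℝ) × (Fin n → ℝ) → ℝ} {x u : Fin n → ℝ}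
    (hg : DifferentiableAt ℝ g (x, u)) (v : Fin n → ℝ) :
    fderiv ℝ (fun y => g (y, u)) x v = fderiv ℝ g (x, u) (v, 0) := by
  have h1 : HasFDerivAt (fun y : Fin n → ℝ => (y, u))
      (ContinuousLinearMap.inl ℝ (Fin n → ℝ) (Fin n → ℝ)) x := hasFDerivAt_prodMk_left x u
  have := (hg.hasFDerivAt.comp x h1).fderiv
  rw [show (fun y => g (y, u)) = g ∘ (fun y => (y, u)) from rfl, this]; rfl

private lemma fderiv_snd_slice {n : ℕ} {g : (Fin n → ℝ) × (Fin n → ℝ) → ℝ} {x u : Fin n → ℝ}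
    (hg : DifferentiableAt ℝ g (x, u)) (w : Fin n → ℝ) :
    fderiv ℝ (fun y => g (x, y)) u w = fderiv ℝ g (x, u) (0, w) := by
  have h1 : HasFDerivAt (fun y : Fin n → ℝ => (x, y))
      (ContinuousLinearMap.inr ℝ (Fin n → ℝ) (Fin n → ℝ)) u := hasFDerivAt_prodMk_right x u
  have := (hg.hasFDerivAt.comp u h1).fderiv
  rw [show (fun y => g (x, y)) = g ∘ (fun y => (x, y)) from rfl, this]; rfl

private lemma fderiv_prod_apply_eq {n : ℕ} {g : (Fin n → ℝ) × (Fin n → ℝ) → ℝ} {x u : Fin n → ℝ}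
    (hg : DifferentiableAt ℝ g (x, u)) (v w : Fin n → ℝ) :
    fderiv ℝ g (x, u) (v, w)
      = (∑ j, v j * pder (fun y => g (y, u)) x j) + ∑ j, w j * pder (fun y => g (x, y)) u j := by
  have hgl : DifferentiableAt ℝ (fun y => g (y, u)) x :=
    hg.comp x (differentiableAt_id.prodMk (differentiableAt_const u))
  have hgr : DifferentiableAt ℝ (fun y => g (x, y)) u :=
    hg.comp u ((differentiableAt_const x).prodMk differentiableAt_id)
  have hvw : ((v, w) : (Fin n → ℝ) × (Fin n → ℝ)) = (v, 0) + (0, w) := by simp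
  rw [hvw, map_add, ← fderiv_fst_slice hg v, ← fderiv_snd_slice hg w,
    fderiv_eq_sum_pder hgl v, fderiv_eq_sum_pder hgr w]

private lemma contDiff_one_fderiv_apply {E F : Type*} [NormedAddCommGroup E] [NormedSpace ℝ E]
    [NormedAddCommGroup F] [NormedSpace ℝ F] {g : E → F} (hg : ContDiff ℝ 2 g) (v : E) :
    ContDiff ℝ 1 (fun p => fderiv ℝ g p v) :=
  (hg.fderiv_right (by norm_num)).clm_apply contDiff_const

private lemma mixed_partial_symm {g : ℝ × ℝ → ℝ} (hg : ContDiff ℝ 2 g) (p v w : ℝ × ℝ) :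
    fderiv ℝ (fun z => fderiv ℝ g z v) p w = fderiv ℝ (fun z => fderiv ℝ g z w) p v := by
  have hder : ContDiff ℝ 1 (fderiv ℝ g) := hg.fderiv_right (by norm_num)
  have hdiff : DifferentiableAt ℝ (fderiv ℝ g) p := (hder.differentiable (by norm_num)) p
  have key : ∀ y : ℝ × ℝ, fderiv ℝ (fun z => fderiv ℝ g z y) p
      = (ContinuousLinearMap.apply ℝ ℝ y).comp (fderiv ℝ (fderiv ℝ g) p) := by
    intro y
    have : (fun z => fderiv ℝ g z y) = (ContinuousLinearMap.apply ℝ ℝ y) ∘ (fderiv ℝ g) := rfl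
    rw [this]
    exact (((ContinuousLinearMap.apply ℝ ℝ y).hasFDerivAt.comp p hdiff.hasFDerivAt)).fderiv
  rw [key v, key w]
  have hsymm := second_derivative_symmetric (f := g) (f' := fderiv ℝ g)
    (f'' := fderiv ℝ (fderiv ℝ g) p) (x := p)
    (fun y => ((hg.differentiable (by norm_num)) y).hasFDerivAt) hdiff.hasFDerivAt w v
  simpa using hsymm

namespace FVaux

variable {n : ℕ}

def QQ (q : ℝ → ℝ → Fin n → ℝ) : ℝ × ℝ → Fin n → ℝ := fun p => q p.1 p.2

def vT (q : ℝ → ℝ → Fin n → ℝ) : ℝ × ℝ → Fin n → ℝ :=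
  fun p i => fderiv ℝ (fun z => QQ q z i) p (0, 1)

def vS (q : ℝ → ℝ → Fin n → ℝ) : ℝ × ℝ → Fin n → ℝ :=
  fun p i => fderiv ℝ (fun z => QQ q z i) p (1, 0)

def uu (Ψ : (Fin n → ℝ) → Matrix (Fin n) (Fin n) ℝ) (q : ℝ → ℝ → Fin n → ℝ) :
    ℝ × ℝ → Fin n → ℝ := fun p j => ∑ i, Ψ (QQ q p) j i * vT q p i

def th (Ψ : (Fin n → ℝ) → Matrix (Fin n) (Fin n) ℝ) (q : ℝ → ℝ → Fin n → ℝ) :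
    ℝ × ℝ → Fin n → ℝ := fun p j => ∑ i, Ψ (QQ q p) j i * vS q p i

section lemmas

variable {Ψ Φ : (Fin n → ℝ) → Matrix (Fin n) (Fin n) ℝ} {q : ℝ → ℝ → Fin n → ℝ}

lemma QQi_contDiff (hq : ContDiff ℝ 2 (fun p : ℝ × ℝ => q p.1 p.2)) (i : Fin n) :
    ContDiff ℝ 2 (fun z => QQ q z i) := contDiff_pi.1 hq i

lemma vT_contDiff (hq : ContDiff ℝ 2 (fun p : ℝ × ℝ => q p.1 p.2)) (i : Fin n) :
    ContDiff ℝ 1 (fun p => vT q p i) :=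
  (QQi_contDiff hq i).fderiv_right (by norm_num) |>.clm_apply contDiff_const

lemma vS_contDiff (hq : ContDiff ℝ 2 (fun p : ℝ × ℝ => q p.1 p.2)) (i : Fin n) :
    ContDiff ℝ 1 (fun p => vS q p i) :=
  (QQi_contDiff hq i).fderiv_right (by norm_num) |>.clm_apply contDiff_const

lemma PsiQ_contDiff (hΨ : ∀ i j : Fin n, ContDiff ℝ (⊤ : ℕ∞) (fun x => Ψ x i j))
    (hq : ContDiff ℝ 2 (fun p : ℝ × ℝ => q p.1 p.2)) (j i : Fin n) :
    ContDiff ℝ 1 (fun p => Ψ (QQ q p) j i) :=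
  ((hΨ j i).of_le (by simp)).comp (hq.of_le one_le_two)

lemma uu_contDiff (hΨ : ∀ i j : Fin n, ContDiff ℝ (⊤ : ℕ∞) (fun x => Ψ x i j))
    (hq : ContDiff ℝ 2 (fun p : ℝ × ℝ => q p.1 p.2)) (j : Fin n) :
    ContDiff ℝ 1 (fun p => uu Ψ q p j) :=
  ContDiff.sum fun i _ => (PsiQ_contDiff hΨ hq j i).mul (vT_contDiff hq i)

lemma th_contDiff (hΨ : ∀ i j : Fin n, ContDiff ℝ (⊤ : ℕ∞) (fun x => Ψ x i j))
    (hq : ContDiff ℝ 2 (fun p : ℝ × ℝ => q p.1 p.2)) (j : Fin n) :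
    ContDiff ℝ 1 (fun p => th Ψ q p j) :=
  ContDiff.sum fun i _ => (PsiQ_contDiff hΨ hq j i).mul (vS_contDiff hq i)

lemma deriv_t_eq_vT (hq : ContDiff ℝ 2 (fun p : ℝ × ℝ => q p.1 p.2)) (s t : ℝ) (i : Fin n) :
    deriv (fun t' => q s t' i) t = vT q (s, t) i :=
  (hasDerivAt_slice_right (((QQi_contDiff hq i).differentiable (by norm_num)) (s, t))).deriv

lemma deriv_s_eq_vS (hq : ContDiff ℝ 2 (fun p : ℝ × ℝ => q p.1 p.2)) (s t : ℝ) (i : Fin n) :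
    deriv (fun s' => q s' t i) s = vS q (s, t) i :=
  (hasDerivAt_slice_left (((QQi_contDiff hq i).differentiable (by norm_num)) (s, t))).deriv


lemma Phi_entry_continuous (hΨ : ∀ i j : Fin n, ContDiff ℝ (⊤ : ℕ∞) (fun x => Ψ x i j))
    (hΦ : ∀ x, Ψ x * Φ x = 1 ∧ Φ x * Ψ x = 1) (i j : Fin n) :
    Continuous fun x => Φ x i j := by
  have hΨc : Continuous fun x => Ψ x := continuous_matrix fun i j => (hΨ i j).continuous
  have hdet : Continuous fun x => (Ψ x).det := hΨc.matrix_det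
  have hadj : Continuous fun x => (Ψ x).adjugate := hΨc.matrix_adjugate
  have hunit : ∀ x, IsUnit (Ψ x).det := fun x =>
    Matrix.isUnit_det_of_right_inverse (hΦ x).1
  have hne : ∀ x, (Ψ x).det ≠ 0 := fun x => (hunit x).ne_zero
  have hform : ∀ x, Φ x i j = ((Ψ x).det)⁻¹ * (Ψ x).adjugate i j := by
    intro x
    have h1 : Φ x = (Ψ x)⁻¹ := (Matrix.inv_eq_right_inv (hΦ x).1).symm
    rw [h1, Matrix.inv_def, Matrix.smul_apply, Ring.inverse_eq_inv', smul_eq_mul]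
  simp only [hform]
  exact (hdet.inv₀ hne).mul ((continuous_apply_apply i j).comp hadj)

lemma inverse_contract {x : Fin n → ℝ} (hx : Φ x * Ψ x = 1) (w : Fin n → ℝ) (α : Fin n) :
    ∑ k, Φ x α k * (∑ β, Ψ x k β * w β) = w α := by
  have h1 : ∀ β, (∑ k, Φ x α k * Ψ x k β) = (1 : Matrix (Fin n) (Fin n) ℝ) α β := fun β => by
    rw [← Matrix.mul_apply, hx]
  calc ∑ k, Φ x α k * (∑ β, Ψ x k β * w β)
      = ∑ k, ∑ β, Φ x α k * Ψ x k β * w β := by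
        refine Finset.sum_congr rfl fun k _ => ?_
        rw [Finset.mul_sum]; exact Finset.sum_congr rfl fun β _ => by ring
    _ = ∑ β, (∑ k, Φ x α k * Ψ x k β) * w β := by
        rw [Finset.sum_comm]
        exact Finset.sum_congr rfl fun β _ => by rw [Finset.sum_mul]
    _ = w α := by simp [h1, Matrix.one_apply]

lemma contract_uu {p : ℝ × ℝ} (hx : Φ (QQ q p) * Ψ (QQ q p) = 1) (α : Fin n) :
    ∑ k, Φ (QQ q p) α k * uu Ψ q p k = vT q p α := by
  have := inverse_contract (Ψ := Ψ) hx (vT q p) α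
  simpa [uu] using this

lemma contract_th {p : ℝ × ℝ} (hx : Φ (QQ q p) * Ψ (QQ q p) = 1) (α : Fin n) :
    ∑ k, Φ (QQ q p) α k * th Ψ q p k = vS q p α := by
  have := inverse_contract (Ψ := Ψ) hx (vS q p) α
  simpa [th] using this


lemma fderiv_PsiQ (hΨ : ∀ i j : Fin n, ContDiff ℝ (⊤ : ℕ∞) (fun x => Ψ x i j))
    (hq : ContDiff ℝ 2 (fun p : ℝ × ℝ => q p.1 p.2)) (p e : ℝ × ℝ) (j i : Fin n) :
    fderiv ℝ (fun z => Ψ (QQ q z) j i) p e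
      = ∑ k, fderiv ℝ (fun z => QQ q z k) p e * pder (fun y => Ψ y j i) (QQ q p) k := by
  have hQd : DifferentiableAt ℝ (QQ q) p := (hq.differentiable (by norm_num)).differentiableAt
  have hF : DifferentiableAt ℝ (fun y => Ψ y j i) (QQ q p) :=
    ((hΨ j i).differentiable (by simp)).differentiableAt
  have hcomp := (hF.hasFDerivAt.comp p hQd.hasFDerivAt).fderiv
  have h1 : fderiv ℝ (fun z => Ψ (QQ q z) j i) p e
      = fderiv ℝ (fun y => Ψ y j i) (QQ q p) (fderiv ℝ (QQ q) p e) := by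
    rw [show (fun z => Ψ (QQ q z) j i) = (fun y => Ψ y j i) ∘ QQ q from rfl, hcomp]; rfl
  rw [h1, fderiv_eq_sum_pder hF]
  refine Finset.sum_congr rfl fun k _ => ?_
  congr 1
  have hpi : fderiv ℝ (QQ q) p
      = ContinuousLinearMap.pi fun k => fderiv ℝ (fun z => QQ q z k) p :=
    fderiv_pi fun k => ((QQi_contDiff hq k).differentiable (by norm_num)).differentiableAt
  rw [hpi]; rfl

lemma fderiv_uu (hΨ : ∀ i j : Fin n, ContDiff ℝ (⊤ : ℕ∞) (fun x => Ψ x i j))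
    (hq : ContDiff ℝ 2 (fun p : ℝ × ℝ => q p.1 p.2)) (p e : ℝ × ℝ) (j : Fin n) :
    fderiv ℝ (fun z => uu Ψ q z j) p e
      = ∑ i, ((∑ k, fderiv ℝ (fun z => QQ q z k) p e * pder (fun y => Ψ y j i) (QQ q p) k)
            * vT q p i
          + Ψ (QQ q p) j i * fderiv ℝ (fun z => vT q z i) p e) := by
  have hΨd : ∀ i : Fin n, DifferentiableAt ℝ (fun z => Ψ (QQ q z) j i) p := fun i =>
    ((PsiQ_contDiff hΨ hq j i).differentiable (by norm_num)).differentiableAt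
  have hvd : ∀ i : Fin n, DifferentiableAt ℝ (fun z => vT q z i) p := fun i =>
    ((vT_contDiff hq i).differentiable (by norm_num)).differentiableAt
  have h1 : fderiv ℝ (fun z => uu Ψ q z j) p
      = ∑ i, fderiv ℝ (fun z => Ψ (QQ q z) j i * vT q z i) p := by
    rw [show (fun z => uu Ψ q z j) = fun z => ∑ i, Ψ (QQ q z) j i * vT q z i from rfl]
    exact fderiv_fun_sum fun i _ => ((hΨd i).mul (hvd i))
  rw [h1, ContinuousLinearMap.sum_apply]
  refine Finset.sum_congr rfl fun i _ => ?_
  rw [fderiv_fun_mul (hΨd i) (hvd i)]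
  simp only [ContinuousLinearMap.add_apply, ContinuousLinearMap.smul_apply, smul_eq_mul]
  rw [fderiv_PsiQ hΨ hq p e j i]
  ring

lemma fderiv_th (hΨ : ∀ i j : Fin n, ContDiff ℝ (⊤ : ℕ∞) (fun x => Ψ x i j))
    (hq : ContDiff ℝ 2 (fun p : ℝ × ℝ => q p.1 p.2)) (p e : ℝ × ℝ) (j : Fin n) :
    fderiv ℝ (fun z => th Ψ q z j) p e
      = ∑ i, ((∑ k, fderiv ℝ (fun z => QQ q z k) p e * pder (fun y => Ψ y j i) (QQ q p) k)
            * vS q p i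
          + Ψ (QQ q p) j i * fderiv ℝ (fun z => vS q z i) p e) := by
  have hΨd : ∀ i : Fin n, DifferentiableAt ℝ (fun z => Ψ (QQ q z) j i) p := fun i =>
    ((PsiQ_contDiff hΨ hq j i).differentiable (by norm_num)).differentiableAt
  have hvd : ∀ i : Fin n, DifferentiableAt ℝ (fun z => vS q z i) p := fun i =>
    ((vS_contDiff hq i).differentiable (by norm_num)).differentiableAt
  have h1 : fderiv ℝ (fun z => th Ψ q z j) p
      = ∑ i, fderiv ℝ (fun z => Ψ (QQ q z) j i * vS q z i) p := by
    rw [show (fun z => th Ψ q z j) = fun z => ∑ i, Ψ (QQ q z) j i * vS q z i from rfl]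
    exact fderiv_fun_sum fun i _ => ((hΨd i).mul (hvd i))
  rw [h1, ContinuousLinearMap.sum_apply]
  refine Finset.sum_congr rfl fun i _ => ?_
  rw [fderiv_fun_mul (hΨd i) (hvd i)]
  simp only [ContinuousLinearMap.add_apply, ContinuousLinearMap.smul_apply, smul_eq_mul]
  rw [fderiv_PsiQ hΨ hq p e j i]
  ring

lemma key_identity (hΨ : ∀ i j : Fin n, ContDiff ℝ (⊤ : ℕ∞) (fun x => Ψ x i j))
    (hq : ContDiff ℝ 2 (fun p : ℝ × ℝ => q p.1 p.2)) (p : ℝ × ℝ) (j : Fin n) :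
    fderiv ℝ (fun z => uu Ψ q z j) p (1, 0)
      = fderiv ℝ (fun z => th Ψ q z j) p (0, 1)
        + ∑ i, ∑ k, (pder (fun y => Ψ y j i) (QQ q p) k - pder (fun y => Ψ y j k) (QQ q p) i)
            * vS q p k * vT q p i := by
  have hmix : ∀ i : Fin n,
      fderiv ℝ (fun z => vT q z i) p (1, 0) = fderiv ℝ (fun z => vS q z i) p (0, 1) :=
    fun i => mixed_partial_symm (QQi_contDiff hq i) p (0, 1) (1, 0)
  rw [fderiv_uu hΨ hq p (1, 0) j, fderiv_th hΨ hq p (0, 1) j]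
  have hS : ∀ k : Fin n, fderiv ℝ (fun z => QQ q z k) p ((1 : ℝ), (0 : ℝ)) = vS q p k :=
    fun k => rfl
  have hT : ∀ k : Fin n, fderiv ℝ (fun z => QQ q z k) p ((0 : ℝ), (1 : ℝ)) = vT q p k :=
    fun k => rfl
  simp only [hS, hT, hmix]
  have lhs1 : ∑ i, (∑ k, vS q p k * pder (fun y => Ψ y j i) (QQ q p) k) * vT q p i
      = ∑ i, ∑ k, pder (fun y => Ψ y j i) (QQ q p) k * vS q p k * vT q p i := by
    refine Finset.sum_congr rfl fun i _ => ?_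
    rw [Finset.sum_mul]
    exact Finset.sum_congr rfl fun k _ => by ring
  have lhs2 : ∑ i, (∑ k, vT q p k * pder (fun y => Ψ y j i) (QQ q p) k) * vS q p i
      = ∑ i, ∑ k, pder (fun y => Ψ y j k) (QQ q p) i * vS q p k * vT q p i := by
    rw [Finset.sum_comm]
    refine Finset.sum_congr rfl fun i _ => ?_
    rw [Finset.sum_mul]
    exact Finset.sum_congr rfl fun k _ => by ring
  rw [Finset.sum_add_distrib, Finset.sum_add_distrib, lhs1, lhs2]
  have hXY : (∑ i, ∑ k, pder (fun y => Ψ y j i) (QQ q p) k * vS q p k * vT q p i)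
      = (∑ i, ∑ k, pder (fun y => Ψ y j k) (QQ q p) i * vS q p k * vT q p i)
        + ∑ i, ∑ k, (pder (fun y => Ψ y j i) (QQ q p) k - pder (fun y => Ψ y j k) (QQ q p) i)
            * vS q p k * vT q p i := by
    rw [← Finset.sum_add_distrib]
    refine Finset.sum_congr rfl fun i _ => ?_
    rw [← Finset.sum_add_distrib]
    refine Finset.sum_congr rfl fun k _ => ?_
    ring
  rw [hXY]; ring


private lemma sum4_comm (f : Fin n → Fin n → Fin n → Fin n → ℝ) :
    ∑ i, ∑ k, ∑ α, ∑ β, f i k α β = ∑ α, ∑ β, ∑ k, ∑ i, f i k α β :=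
  calc ∑ i, ∑ k, ∑ α, ∑ β, f i k α β
      = ∑ k, ∑ i, ∑ α, ∑ β, f i k α β := Finset.sum_comm
    _ = ∑ k, ∑ α, ∑ i, ∑ β, f i k α β := Finset.sum_congr rfl fun k _ => Finset.sum_comm
    _ = ∑ k, ∑ α, ∑ β, ∑ i, f i k α β :=
        Finset.sum_congr rfl fun k _ => Finset.sum_congr rfl fun α _ => Finset.sum_comm
    _ = ∑ α, ∑ k, ∑ β, ∑ i, f i k α β := Finset.sum_comm
    _ = ∑ α, ∑ β, ∑ k, ∑ i, f i k α β := Finset.sum_congr rfl fun α _ => Finset.sum_comm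

lemma hamel_contract (hΦ : ∀ x, Ψ x * Φ x = 1 ∧ Φ x * Ψ x = 1) (p : ℝ × ℝ) (j : Fin n) :
    ∑ i, (∑ k, hamel Ψ Φ (QQ q p) j k i * uu Ψ q p k) * th Ψ q p i
      = ∑ i, ∑ k, (pder (fun y => Ψ y j i) (QQ q p) k - pder (fun y => Ψ y j k) (QQ q p) i)
          * vS q p k * vT q p i := by
  have hcu : ∀ α, ∑ k, Φ (QQ q p) α k * uu Ψ q p k = vT q p α :=
    contract_uu (hΦ (QQ q p)).2
  have hcθ : ∀ α, ∑ k, Φ (QQ q p) α k * th Ψ q p k = vS q p α :=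
    contract_th (hΦ (QQ q p)).2
  calc ∑ i, (∑ k, hamel Ψ Φ (QQ q p) j k i * uu Ψ q p k) * th Ψ q p i
      = ∑ i, ∑ k, ∑ α, ∑ β,
          (pder (fun y => Ψ y j α) (QQ q p) β - pder (fun y => Ψ y j β) (QQ q p) α)
            * Φ (QQ q p) α k * Φ (QQ q p) β i * uu Ψ q p k * th Ψ q p i := by
        refine Finset.sum_congr rfl fun i _ => ?_
        rw [Finset.sum_mul]
        refine Finset.sum_congr rfl fun k _ => ?_
        unfold hamel
        rw [Finset.sum_mul, Finset.sum_mul]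
        refine Finset.sum_congr rfl fun α _ => ?_
        rw [Finset.sum_mul, Finset.sum_mul]
    _ = ∑ α, ∑ β, ∑ k, ∑ i,
          (pder (fun y => Ψ y j α) (QQ q p) β - pder (fun y => Ψ y j β) (QQ q p) α)
            * Φ (QQ q p) α k * Φ (QQ q p) β i * uu Ψ q p k * th Ψ q p i := sum4_comm _
    _ = ∑ α, ∑ β,
          (pder (fun y => Ψ y j α) (QQ q p) β - pder (fun y => Ψ y j β) (QQ q p) α)
            * (∑ k, Φ (QQ q p) α k * uu Ψ q p k) * (∑ i, Φ (QQ q p) β i * th Ψ q p i) := by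
        refine Finset.sum_congr rfl fun α _ => Finset.sum_congr rfl fun β _ => ?_
        simp only [Finset.mul_sum, Finset.sum_mul]
        rw [Finset.sum_comm]
        refine Finset.sum_congr rfl fun k _ => Finset.sum_congr rfl fun i _ => by ring
    _ = ∑ α, ∑ β,
          (pder (fun y => Ψ y j α) (QQ q p) β - pder (fun y => Ψ y j β) (QQ q p) α)
            * vT q p α * vS q p β := by
        refine Finset.sum_congr rfl fun α _ => Finset.sum_congr rfl fun β _ => ?_
        rw [hcu α, hcθ β]
    _ = ∑ i, ∑ k, (pder (fun y => Ψ y j i) (QQ q p) k - pder (fun y => Ψ y j k) (QQ q p) i)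
          * vS q p k * vT q p i := by
        refine Finset.sum_congr rfl fun α _ => Finset.sum_congr rfl fun β _ => ?_
        ring


lemma hasDerivAt_param_integral {f : ℝ × ℝ → ℝ} (hf : ContDiff ℝ 1 f) (a b : ℝ) :
    HasDerivAt (fun x => ∫ t in a..b, f (x, t))
      (∫ t in a..b, fderiv ℝ f (0, t) (1, 0)) 0 := by
  have hfc : Continuous f := hf.continuous
  have hF'c : Continuous fun p : ℝ × ℝ => fderiv ℝ f p (1, 0) :=
    ((ContinuousLinearMap.apply ℝ ℝ ((1:ℝ), (0:ℝ))).continuous).comp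
      (hf.continuous_fderiv (by norm_num))
  set K : Set (ℝ × ℝ) := Set.Icc (-1 : ℝ) 1 ×ˢ Set.uIcc a b with hK
  have hKc : IsCompact K := isCompact_Icc.prod isCompact_uIcc
  obtain ⟨M, hM⟩ := hKc.exists_bound_of_continuousOn
    ((hF'c.continuousOn) : ContinuousOn (fun p : ℝ × ℝ => fderiv ℝ f p (1, 0)) K)
  have key := intervalIntegral.hasDerivAt_integral_of_dominated_loc_of_deriv_le
    (F := fun x t => f (x, t)) (F' := fun x t => fderiv ℝ f (x, t) (1, 0))
    (x₀ := (0 : ℝ)) (s := Metric.ball 0 1) (a := a) (b := b) (μ := MeasureTheory.volume)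
    (bound := fun _ => M)
    (Metric.ball_mem_nhds _ one_pos)
    (Filter.Eventually.of_forall fun x =>
      ((hfc.comp (continuous_const.prodMk continuous_id)).aestronglyMeasurable))
    ((hfc.comp (continuous_const.prodMk continuous_id)).intervalIntegrable a b)
    ((hF'c.comp (continuous_const.prodMk continuous_id)).aestronglyMeasurable)
    (Filter.Eventually.of_forall fun t ht x hx => by
      have hmem : (x, t) ∈ K := by
        constructor
        · have := Metric.mem_ball.1 hx
          simp only [Real.dist_eq, sub_zero] at this
          exact Set.mem_Icc.2 (abs_le.1 this.le)
        · exact Set.uIoc_subset_uIcc ht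
      exact hM _ hmem)
    (intervalIntegrable_const)
    (Filter.Eventually.of_forall fun t ht x hx =>
      hasDerivAt_slice_left ((hf.differentiable (by norm_num)) (x, t)))
  exact key.2


lemma hasDerivAt_f_slice {C : (Fin n → ℝ) → (Fin n → ℝ) → ℝ} {m : ℕ}
    (hΨ : ∀ i j : Fin n, ContDiff ℝ (⊤ : ℕ∞) (fun x => Ψ x i j))
    (hq : ContDiff ℝ 2 (fun p : ℝ × ℝ => q p.1 p.2))
    (hC : ContDiff ℝ 2 (fun pr : (Fin n → ℝ) × (Fin n → ℝ) => C pr.1 pr.2))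
    (μ : Fin n → ℝ → ℝ) (t x : ℝ) :
    HasDerivAt (fun s => C (q s t) (uu Ψ q (s, t))
        + ∑ σ ∈ Finset.univ.filter (fun σ : Fin n => (σ : ℕ) < m), μ σ t * uu Ψ q (s, t) σ)
      ((∑ j, vS q (x, t) j * pder (fun y => C y (uu Ψ q (x, t))) (QQ q (x, t)) j)
        + (∑ j, fderiv ℝ (fun z => uu Ψ q z j) (x, t) ((1:ℝ), (0:ℝ))
            * pder (C (QQ q (x, t))) (uu Ψ q (x, t)) j)
        + ∑ σ ∈ Finset.univ.filter (fun σ : Fin n => (σ : ℕ) < m),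
            μ σ t * fderiv ℝ (fun z => uu Ψ q z σ) (x, t) ((1:ℝ), (0:ℝ))) x := by
  have hQ : HasDerivAt (fun s => q s t) (vS q (x, t)) x :=
    hasDerivAt_pi.2 fun i =>
      hasDerivAt_slice_left (((QQi_contDiff hq i).differentiable (by norm_num)) (x, t))
  have huD : ∀ j : Fin n, HasDerivAt (fun s => uu Ψ q (s, t) j)
      (fderiv ℝ (fun z => uu Ψ q z j) (x, t) ((1:ℝ), (0:ℝ))) x := fun j =>
    hasDerivAt_slice_left (((uu_contDiff hΨ hq j).differentiable (by norm_num)) (x, t))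
  have hu : HasDerivAt (fun s => uu Ψ q (s, t))
      (fun j => fderiv ℝ (fun z => uu Ψ q z j) (x, t) ((1:ℝ), (0:ℝ))) x :=
    hasDerivAt_pi.2 huD
  have hG := hQ.prodMk hu
  have hCd : DifferentiableAt ℝ (fun pr : (Fin n → ℝ) × (Fin n → ℝ) => C pr.1 pr.2)
      (q x t, uu Ψ q (x, t)) := (hC.differentiable (by norm_num)) _
  have h1 : HasDerivAt (fun s => C (q s t) (uu Ψ q (s, t)))
      (fderiv ℝ (fun pr : (Fin n → ℝ) × (Fin n → ℝ) => C pr.1 pr.2) (q x t, uu Ψ q (x, t))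
        (vS q (x, t), fun j => fderiv ℝ (fun z => uu Ψ q z j) (x, t) ((1:ℝ), (0:ℝ)))) x :=
    (hCd.hasFDerivAt.comp_hasDerivAt x hG :)
  have hval := fderiv_prod_apply_eq hCd (vS q (x, t))
    (fun j => fderiv ℝ (fun z => uu Ψ q z j) (x, t) ((1:ℝ), (0:ℝ)))
  rw [hval] at h1
  have h2 : HasDerivAt (fun s => ∑ σ ∈ Finset.univ.filter (fun σ : Fin n => (σ : ℕ) < m),
        μ σ t * uu Ψ q (s, t) σ)
      (∑ σ ∈ Finset.univ.filter (fun σ : Fin n => (σ : ℕ) < m),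
        μ σ t * fderiv ℝ (fun z => uu Ψ q z σ) (x, t) ((1:ℝ), (0:ℝ))) x :=
    HasDerivAt.fun_sum fun σ _ => (huD σ).const_mul (μ σ t)
  have := h1.add h2
  exact this

lemma hasDerivAt_th_slice (hΨ : ∀ i j : Fin n, ContDiff ℝ (⊤ : ℕ∞) (fun x => Ψ x i j))
    (hq : ContDiff ℝ 2 (fun p : ℝ × ℝ => q p.1 p.2)) (t : ℝ) (j : Fin n) :
    HasDerivAt (fun t' => th Ψ q (0, t') j)
      (fderiv ℝ (fun z => th Ψ q z j) (0, t) ((0:ℝ), (1:ℝ))) t :=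
  hasDerivAt_slice_right (((th_contDiff hΨ hq j).differentiable (by norm_num)) (0, t))

lemma th_boundary (hq : ContDiff ℝ 2 (fun p : ℝ × ℝ => q p.1 p.2)) {c : ℝ}
    (hc : ∀ s, q s c = q 0 c) (j : Fin n) : th Ψ q (0, c) j = 0 := by
  have hvS : ∀ i : Fin n, vS q (0, c) i = 0 := by
    intro i
    have h1 : deriv (fun s' => q s' c i) 0 = vS q (0, c) i := deriv_s_eq_vS hq 0 c i
    rw [← h1]
    have h2 : (fun s' => q s' c i) = fun _ => q 0 c i := funext fun s' => by rw [hc s']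
    rw [h2, deriv_const]
  unfold th
  simp [hvS]


lemma E_eq {C : (Fin n → ℝ) → (Fin n → ℝ) → ℝ} {m : ℕ}
    (hΨ : ∀ i j : Fin n, ContDiff ℝ (⊤ : ℕ∞) (fun x => Ψ x i j))
    (hΦ : ∀ x, Ψ x * Φ x = 1 ∧ Φ x * Ψ x = 1)
    (hq : ContDiff ℝ 2 (fun p : ℝ × ℝ => q p.1 p.2))
    (hCu : ∀ (x v : Fin n → ℝ) (σ : Fin n), (σ : ℕ) < m → pder (C x) v σ = 0)
    (μv : Fin n → ℝ) (p : ℝ × ℝ) :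
    (∑ j, vS q p j * pder (fun y => C y (uu Ψ q p)) (QQ q p) j)
      + (∑ j, fderiv ℝ (fun z => uu Ψ q z j) p ((1:ℝ),(0:ℝ))
          * pder (C (QQ q p)) (uu Ψ q p) j)
      + (∑ σ ∈ Finset.univ.filter (fun σ : Fin n => (σ : ℕ) < m),
          μv σ * fderiv ℝ (fun z => uu Ψ q z σ) p ((1:ℝ),(0:ℝ)))
    = (∑ i, ((∑ j, pder (fun y => C y (uu Ψ q p)) (QQ q p) j * Φ (QQ q p) j i)
          + (∑ I ∈ Finset.univ.filter (fun I : Fin n => m ≤ (I : ℕ)), ∑ k,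
              pder (C (QQ q p)) (uu Ψ q p) I * hamel Ψ Φ (QQ q p) I k i * uu Ψ q p k)
          + (∑ σ ∈ Finset.univ.filter (fun σ : Fin n => (σ : ℕ) < m), ∑ k,
              μv σ * hamel Ψ Φ (QQ q p) σ k i * uu Ψ q p k)) * th Ψ q p i)
      + (∑ I ∈ Finset.univ.filter (fun I : Fin n => m ≤ (I : ℕ)),
          pder (C (QQ q p)) (uu Ψ q p) I * fderiv ℝ (fun z => th Ψ q z I) p ((0:ℝ),(1:ℝ)))
      + (∑ σ ∈ Finset.univ.filter (fun σ : Fin n => (σ : ℕ) < m),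
          μv σ * fderiv ℝ (fun z => th Ψ q z σ) p ((0:ℝ),(1:ℝ))) := by
  classical
  have hDsu : ∀ j, fderiv ℝ (fun z => uu Ψ q z j) p ((1:ℝ),(0:ℝ))
      = fderiv ℝ (fun z => th Ψ q z j) p ((0:ℝ),(1:ℝ))
        + ∑ i, (∑ k, hamel Ψ Φ (QQ q p) j k i * uu Ψ q p k) * th Ψ q p i := by
    intro j
    rw [key_identity hΨ hq p j, ← hamel_contract hΦ p j]
  -- split the middle sum over constrained/unconstrained indices
  have hsplit : (∑ j, fderiv ℝ (fun z => uu Ψ q z j) p ((1:ℝ),(0:ℝ))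
        * pder (C (QQ q p)) (uu Ψ q p) j)
      = ∑ I ∈ Finset.univ.filter (fun I : Fin n => m ≤ (I : ℕ)),
          fderiv ℝ (fun z => uu Ψ q z I) p ((1:ℝ),(0:ℝ)) * pder (C (QQ q p)) (uu Ψ q p) I := by
    rw [← Finset.sum_filter_add_sum_filter_not Finset.univ (fun j : Fin n => (j : ℕ) < m)]
    have h0 : (∑ σ ∈ Finset.univ.filter (fun σ : Fin n => (σ : ℕ) < m),
        fderiv ℝ (fun z => uu Ψ q z σ) p ((1:ℝ),(0:ℝ)) * pder (C (QQ q p)) (uu Ψ q p) σ) = 0 :=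
      Finset.sum_eq_zero fun σ hσ => by
        rw [hCu _ _ σ (Finset.mem_filter.1 hσ).2, mul_zero]
    rw [h0, zero_add]
    refine Finset.sum_congr ?_ fun _ _ => rfl
    exact Finset.filter_congr fun j _ => by simp [not_lt]
  rw [hsplit]
  have hA : (∑ i, ((∑ j, pder (fun y => C y (uu Ψ q p)) (QQ q p) j * Φ (QQ q p) j i)
          + (∑ I ∈ Finset.univ.filter (fun I : Fin n => m ≤ (I : ℕ)), ∑ k,
              pder (C (QQ q p)) (uu Ψ q p) I * hamel Ψ Φ (QQ q p) I k i * uu Ψ q p k)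
          + (∑ σ ∈ Finset.univ.filter (fun σ : Fin n => (σ : ℕ) < m), ∑ k,
              μv σ * hamel Ψ Φ (QQ q p) σ k i * uu Ψ q p k)) * th Ψ q p i)
      = (∑ j, vS q p j * pder (fun y => C y (uu Ψ q p)) (QQ q p) j)
        + (∑ I ∈ Finset.univ.filter (fun I : Fin n => m ≤ (I : ℕ)),
            (∑ i, (∑ k, hamel Ψ Φ (QQ q p) I k i * uu Ψ q p k) * th Ψ q p i)
              * pder (C (QQ q p)) (uu Ψ q p) I)
        + (∑ σ ∈ Finset.univ.filter (fun σ : Fin n => (σ : ℕ) < m),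
            μv σ * ∑ i, (∑ k, hamel Ψ Φ (QQ q p) σ k i * uu Ψ q p k) * th Ψ q p i) := by
    simp only [add_mul, Finset.sum_add_distrib]
    congr 1
    · congr 1
      · -- X part
        have hvS : ∀ j, vS q p j = ∑ i, Φ (QQ q p) j i * th Ψ q p i := fun j =>
          (contract_th (hΦ (QQ q p)).2 j).symm
        calc ∑ i, (∑ j, pder (fun y => C y (uu Ψ q p)) (QQ q p) j * Φ (QQ q p) j i) * th Ψ q p i
            = ∑ i, ∑ j, pder (fun y => C y (uu Ψ q p)) (QQ q p) j * Φ (QQ q p) j i * th Ψ q p i := by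
              exact Finset.sum_congr rfl fun i _ => Finset.sum_mul _ _ _
          _ = ∑ j, ∑ i, pder (fun y => C y (uu Ψ q p)) (QQ q p) j * Φ (QQ q p) j i * th Ψ q p i :=
              Finset.sum_comm
          _ = ∑ j, vS q p j * pder (fun y => C y (uu Ψ q p)) (QQ q p) j := by
              refine Finset.sum_congr rfl fun j _ => ?_
              rw [hvS j, Finset.sum_mul]
              exact Finset.sum_congr rfl fun i _ => by ring
      · -- Y part
        calc ∑ i, (∑ I ∈ Finset.univ.filter (fun I : Fin n => m ≤ (I : ℕ)), ∑ k,
              pder (C (QQ q p)) (uu Ψ q p) I * hamel Ψ Φ (QQ q p) I k i * uu Ψ q p k) * th Ψ q p i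
            = ∑ i, ∑ I ∈ Finset.univ.filter (fun I : Fin n => m ≤ (I : ℕ)), (∑ k,
              pder (C (QQ q p)) (uu Ψ q p) I * hamel Ψ Φ (QQ q p) I k i * uu Ψ q p k) * th Ψ q p i := by
              exact Finset.sum_congr rfl fun i _ => Finset.sum_mul _ _ _
          _ = ∑ I ∈ Finset.univ.filter (fun I : Fin n => m ≤ (I : ℕ)), ∑ i, (∑ k,
              pder (C (QQ q p)) (uu Ψ q p) I * hamel Ψ Φ (QQ q p) I k i * uu Ψ q p k) * th Ψ q p i :=
              Finset.sum_comm
          _ = ∑ I ∈ Finset.univ.filter (fun I : Fin n => m ≤ (I : ℕ)),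
              (∑ i, (∑ k, hamel Ψ Φ (QQ q p) I k i * uu Ψ q p k) * th Ψ q p i)
                * pder (C (QQ q p)) (uu Ψ q p) I := by
              refine Finset.sum_congr rfl fun I _ => ?_
              simp only [Finset.sum_mul]
              exact Finset.sum_congr rfl fun i _ => Finset.sum_congr rfl fun k _ => by ring
    · -- Z part
      calc ∑ i, (∑ σ ∈ Finset.univ.filter (fun σ : Fin n => (σ : ℕ) < m), ∑ k,
            μv σ * hamel Ψ Φ (QQ q p) σ k i * uu Ψ q p k) * th Ψ q p i
          = ∑ i, ∑ σ ∈ Finset.univ.filter (fun σ : Fin n => (σ : ℕ) < m), (∑ k,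
            μv σ * hamel Ψ Φ (QQ q p) σ k i * uu Ψ q p k) * th Ψ q p i := by
            exact Finset.sum_congr rfl fun i _ => Finset.sum_mul _ _ _
        _ = ∑ σ ∈ Finset.univ.filter (fun σ : Fin n => (σ : ℕ) < m), ∑ i, (∑ k,
            μv σ * hamel Ψ Φ (QQ q p) σ k i * uu Ψ q p k) * th Ψ q p i := Finset.sum_comm
        _ = ∑ σ ∈ Finset.univ.filter (fun σ : Fin n => (σ : ℕ) < m),
            μv σ * ∑ i, (∑ k, hamel Ψ Φ (QQ q p) σ k i * uu Ψ q p k) * th Ψ q p i := by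
            refine Finset.sum_congr rfl fun σ _ => ?_
            simp only [Finset.mul_sum, Finset.sum_mul]
            exact Finset.sum_congr rfl fun i _ => Finset.sum_congr rfl fun k _ => by ring
  rw [hA]
  simp only [hDsu, add_mul, mul_add, Finset.sum_add_distrib]
  have hc : ∑ I ∈ Finset.univ.filter (fun I : Fin n => m ≤ (I:ℕ)),
      fderiv ℝ (fun z => th Ψ q z I) p ((0:ℝ),(1:ℝ)) * pder (C (QQ q p)) (uu Ψ q p) I
    = ∑ I ∈ Finset.univ.filter (fun I : Fin n => m ≤ (I:ℕ)),
      pder (C (QQ q p)) (uu Ψ q p) I * fderiv ℝ (fun z => th Ψ q z I) p ((0:ℝ),(1:ℝ)) :=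
    Finset.sum_congr rfl fun I _ => mul_comm _ _
  rw [hc]
  ring


lemma line_contDiff : ContDiff ℝ 2 (fun t : ℝ => ((0:ℝ), t)) := contDiff_const.prodMk contDiff_id

lemma curve_contDiff (hq : ContDiff ℝ 2 (fun p : ℝ × ℝ => q p.1 p.2)) :
    ContDiff ℝ 2 (fun t : ℝ => q 0 t) := hq.comp line_contDiff

lemma uc_contDiff (hΨ : ∀ i j : Fin n, ContDiff ℝ (⊤ : ℕ∞) (fun x => Ψ x i j))
    (hq : ContDiff ℝ 2 (fun p : ℝ × ℝ => q p.1 p.2)) (j : Fin n) :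
    ContDiff ℝ 1 (fun t : ℝ => uu Ψ q (0, t) j) :=
  (uu_contDiff hΨ hq j).comp (line_contDiff.of_le one_le_two)

lemma thc_contDiff (hΨ : ∀ i j : Fin n, ContDiff ℝ (⊤ : ℕ∞) (fun x => Ψ x i j))
    (hq : ContDiff ℝ 2 (fun p : ℝ × ℝ => q p.1 p.2)) (j : Fin n) :
    ContDiff ℝ 1 (fun t : ℝ => th Ψ q (0, t) j) :=
  (th_contDiff hΨ hq j).comp (line_contDiff.of_le one_le_two)

lemma pair_contDiff (hΨ : ∀ i j : Fin n, ContDiff ℝ (⊤ : ℕ∞) (fun x => Ψ x i j))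
    (hq : ContDiff ℝ 2 (fun p : ℝ × ℝ => q p.1 p.2)) :
    ContDiff ℝ 1 (fun t : ℝ => (q 0 t, uu Ψ q (0, t))) :=
  ((curve_contDiff hq).of_le one_le_two).prodMk (contDiff_pi.2 fun j => uc_contDiff hΨ hq j)

lemma pCu_contDiff (hΨ : ∀ i j : Fin n, ContDiff ℝ (⊤ : ℕ∞) (fun x => Ψ x i j))
    (hq : ContDiff ℝ 2 (fun p : ℝ × ℝ => q p.1 p.2))
    {C : (Fin n → ℝ) → (Fin n → ℝ) → ℝ}
    (hC : ContDiff ℝ 2 (fun pr : (Fin n → ℝ) × (Fin n → ℝ) => C pr.1 pr.2)) (I : Fin n) :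
    ContDiff ℝ 1 (fun t => pder (C (q 0 t)) (uu Ψ q (0, t)) I) := by
  have heq : (fun t => pder (C (q 0 t)) (uu Ψ q (0, t)) I)
      = fun t => fderiv ℝ (fun pr : (Fin n → ℝ) × (Fin n → ℝ) => C pr.1 pr.2)
          (q 0 t, uu Ψ q (0, t)) (0, Pi.single I 1) := by
    funext t
    exact fderiv_snd_slice (hC.differentiable (by norm_num) _) _
  rw [heq]
  exact (contDiff_one_fderiv_apply hC _).comp (pair_contDiff hΨ hq)

lemma pCq_continuous (hΨ : ∀ i j : Fin n, ContDiff ℝ (⊤ : ℕ∞) (fun x => Ψ x i j))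
    (hq : ContDiff ℝ 2 (fun p : ℝ × ℝ => q p.1 p.2))
    {C : (Fin n → ℝ) → (Fin n → ℝ) → ℝ}
    (hC : ContDiff ℝ 2 (fun pr : (Fin n → ℝ) × (Fin n → ℝ) => C pr.1 pr.2)) (j : Fin n) :
    Continuous (fun t => pder (fun y => C y (uu Ψ q (0, t))) (q 0 t) j) := by
  have heq : (fun t => pder (fun y => C y (uu Ψ q (0, t))) (q 0 t) j)
      = fun t => fderiv ℝ (fun pr : (Fin n → ℝ) × (Fin n → ℝ) => C pr.1 pr.2)
          (q 0 t, uu Ψ q (0, t)) (Pi.single j 1, 0) := by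
    funext t
    exact fderiv_fst_slice (hC.differentiable (by norm_num) _) _
  rw [heq]
  exact (((contDiff_one_fderiv_apply hC _).comp (pair_contDiff hΨ hq)).continuous)

lemma Dtth_continuous (hΨ : ∀ i j : Fin n, ContDiff ℝ (⊤ : ℕ∞) (fun x => Ψ x i j))
    (hq : ContDiff ℝ 2 (fun p : ℝ × ℝ => q p.1 p.2)) (j : Fin n) :
    Continuous fun t => fderiv ℝ (fun z => th Ψ q z j) (0, t) ((0:ℝ), (1:ℝ)) := by
  have h1 : Continuous fun p : ℝ × ℝ => fderiv ℝ (fun z => th Ψ q z j) p ((0:ℝ), (1:ℝ)) :=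
    ((ContinuousLinearMap.apply ℝ ℝ ((0:ℝ), (1:ℝ))).continuous).comp
      ((th_contDiff hΨ hq j).continuous_fderiv (by norm_num))
  exact h1.comp (line_contDiff.continuous)

lemma hamel_curve_continuous (hΨ : ∀ i j : Fin n, ContDiff ℝ (⊤ : ℕ∞) (fun x => Ψ x i j))
    (hΦ : ∀ x, Ψ x * Φ x = 1 ∧ Φ x * Ψ x = 1)
    (hq : ContDiff ℝ 2 (fun p : ℝ × ℝ => q p.1 p.2)) (s p r : Fin n) :
    Continuous fun t => hamel Ψ Φ (q 0 t) s p r := by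
  have hcurve : Continuous fun t : ℝ => q 0 t := (curve_contDiff hq).continuous
  have hpd : ∀ α β : Fin n, Continuous fun t => pder (fun y => Ψ y s α) (q 0 t) β := by
    intro α β
    have h2 : ContDiff ℝ 2 (fun y => Ψ y s α) := (hΨ s α).of_le (WithTop.coe_le_coe.2 le_top)
    exact ((contDiff_one_fderiv_apply h2 (Pi.single β 1)).continuous).comp hcurve
  have hΦc : ∀ α β : Fin n, Continuous fun t => Φ (q 0 t) α β := fun α β =>
    (Phi_entry_continuous hΨ hΦ α β).comp hcurve
  unfold hamel
  refine continuous_finset_sum _ fun i _ => continuous_finset_sum _ fun j _ => ?_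
  exact (((hpd i j).sub (hpd j i)).mul (hΦc i p)).mul (hΦc j r)

end lemmas
end FVaux


/-- **First variation of the augmented kinematic cost functional.**
With `C(q,u)` independent of the constrained quasi-velocities and C¹ multipliers `μ_σ`,
for a proper C² variation the first variation of
`I(s) = ∫ [C(q,u) + μ_σ u^σ] dt` is
`I'(0) = ∫ {(∂C/∂q^j Φ^j_i + ∂C/∂u^I γ^I_{si} u^s + μ_σ γ^σ_{si} u^s) δθ^i
  − (d/dt ∂C/∂u^I) δθ^I − μ̇_σ δθ^σ} dt` along the base curve. -/
theorem first_variation_augmented_kinematic_cost {n m : ℕ}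
    (hm : m < n)
    (Ψ Φ : (Fin n → ℝ) → Matrix (Fin n) (Fin n) ℝ)
    (hΨ : ∀ i j : Fin n, ContDiff ℝ (⊤ : ℕ∞) (fun x => Ψ x i j))
    (hΦ : ∀ x, Ψ x * Φ x = 1 ∧ Φ x * Ψ x = 1)
    (C : (Fin n → ℝ) → (Fin n → ℝ) → ℝ)
    (hC : ContDiff ℝ 2 (fun p : (Fin n → ℝ) × (Fin n → ℝ) => C p.1 p.2))
    -- `C` does not depend on the constrained quasi-velocities
    (hCu : ∀ (x v : Fin n → ℝ) (σ : Fin n), (σ : ℕ) < m → pder (C x) v σ = 0)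
    (μ : Fin n → ℝ → ℝ) (hμ : ∀ σ : Fin n, ContDiff ℝ 1 (μ σ))
    (a b : ℝ) (hab : a < b)
    (q : ℝ → ℝ → Fin n → ℝ)
    (hq : ContDiff ℝ 2 (fun p : ℝ × ℝ => q p.1 p.2))
    (hproper : ∀ s, q s a = q 0 a ∧ q s b = q 0 b) :
    deriv (fun s => ∫ t in a..b,
        (C (q s t) (qvel Ψ q s t)
          + ∑ σ ∈ Finset.univ.filter (fun σ : Fin n => (σ : ℕ) < m),
              μ σ t * qvel Ψ q s t σ)) 0
    = ∫ t in a..b,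
        ((∑ i, ((∑ j, pder (fun y => C y (qvel Ψ q 0 t)) (q 0 t) j * Φ (q 0 t) j i)
            + (∑ I ∈ Finset.univ.filter (fun I : Fin n => m ≤ (I : ℕ)), ∑ k,
                pder (C (q 0 t)) (qvel Ψ q 0 t) I * hamel Ψ Φ (q 0 t) I k i
                  * qvel Ψ q 0 t k)
            + (∑ σ ∈ Finset.univ.filter (fun σ : Fin n => (σ : ℕ) < m), ∑ k,
                μ σ t * hamel Ψ Φ (q 0 t) σ k i * qvel Ψ q 0 t k))
          * qvar Ψ q 0 t i)
        - (∑ I ∈ Finset.univ.filter (fun I : Fin n => m ≤ (I : ℕ)),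
            deriv (fun t' => pder (C (q 0 t')) (qvel Ψ q 0 t') I) t * qvar Ψ q 0 t I)
        - (∑ σ ∈ Finset.univ.filter (fun σ : Fin n => (σ : ℕ) < m),
            deriv (μ σ) t * qvar Ψ q 0 t σ)) := by
  classical
  have hqvel : ∀ s t, qvel Ψ q s t = FVaux.uu Ψ q (s, t) := by
    intro s t; funext j
    unfold qvel FVaux.uu
    exact Finset.sum_congr rfl fun i _ => by rw [FVaux.deriv_t_eq_vT hq]; rfl
  have hqvar : ∀ s t, qvar Ψ q s t = FVaux.th Ψ q (s, t) := by
    intro s t; funext j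
    unfold qvar FVaux.th
    exact Finset.sum_congr rfl fun i _ => by rw [FVaux.deriv_s_eq_vS hq]; rfl
  simp only [hqvel, hqvar]
  -- the parameter-dependent integrand as a function on ℝ × ℝ
  set F : ℝ × ℝ → ℝ := fun p => C (FVaux.QQ q p) (FVaux.uu Ψ q p)
      + ∑ σ ∈ Finset.univ.filter (fun σ : Fin n => (σ : ℕ) < m),
          μ σ p.2 * FVaux.uu Ψ q p σ with hFdef
  have hf1 : ContDiff ℝ 1 F := by
    rw [hFdef]
    have h1 : ContDiff ℝ 1 (fun p : ℝ × ℝ => (FVaux.QQ q p, FVaux.uu Ψ q p)) :=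
      (hq.of_le one_le_two).prodMk (contDiff_pi.2 fun j => FVaux.uu_contDiff hΨ hq j)
    exact ((hC.of_le one_le_two).comp h1).add
      (ContDiff.sum fun σ _ => ((hμ σ).comp contDiff_snd).mul (FVaux.uu_contDiff hΨ hq σ))
  have hD := (FVaux.hasDerivAt_param_integral hf1 a b).deriv
  -- pointwise identity for the derivative of the integrand
  have hpt : ∀ t : ℝ, fderiv ℝ F (0, t) ((1:ℝ), (0:ℝ))
      = (∑ i, ((∑ j, pder (fun y => C y (FVaux.uu Ψ q (0, t))) (q 0 t) j * Φ (q 0 t) j i)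
            + (∑ I ∈ Finset.univ.filter (fun I : Fin n => m ≤ (I : ℕ)), ∑ k,
                pder (C (q 0 t)) (FVaux.uu Ψ q (0, t)) I * hamel Ψ Φ (q 0 t) I k i
                  * FVaux.uu Ψ q (0, t) k)
            + (∑ σ ∈ Finset.univ.filter (fun σ : Fin n => (σ : ℕ) < m), ∑ k,
                μ σ t * hamel Ψ Φ (q 0 t) σ k i * FVaux.uu Ψ q (0, t) k))
          * FVaux.th Ψ q (0, t) i)
        + (∑ I ∈ Finset.univ.filter (fun I : Fin n => m ≤ (I : ℕ)),
            pder (C (q 0 t)) (FVaux.uu Ψ q (0, t)) I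
              * fderiv ℝ (fun z => FVaux.th Ψ q z I) (0, t) ((0:ℝ), (1:ℝ)))
        + (∑ σ ∈ Finset.univ.filter (fun σ : Fin n => (σ : ℕ) < m),
            μ σ t * fderiv ℝ (fun z => FVaux.th Ψ q z σ) (0, t) ((0:ℝ), (1:ℝ))) := by
    intro t
    have hs := FVaux.hasDerivAt_f_slice (m := m) hΨ hq hC μ t 0
    have h2 : HasDerivAt (fun x => F (x, t)) (fderiv ℝ F (0, t) ((1:ℝ), (0:ℝ))) 0 :=
      hasDerivAt_slice_left ((hf1.differentiable (by norm_num)) ((0:ℝ), t))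
    have h3 := h2.unique hs
    rw [h3, FVaux.E_eq hΨ hΦ hq hCu (fun σ => μ σ t) ((0:ℝ), t)]
    simp only [FVaux.QQ]

  -- continuity facts along the base curve
  have hcurvec : Continuous fun t : ℝ => q 0 t := (FVaux.curve_contDiff hq).continuous
  have hθc : ∀ j, Continuous fun t => FVaux.th Ψ q (0, t) j := fun j =>
    (FVaux.thc_contDiff hΨ hq j).continuous
  have huc : ∀ j, Continuous fun t => FVaux.uu Ψ q (0, t) j := fun j =>
    (FVaux.uc_contDiff hΨ hq j).continuous
  have hpCuc : ∀ I : Fin n, Continuous fun t => pder (C (q 0 t)) (FVaux.uu Ψ q (0, t)) I :=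
    fun I => (FVaux.pCu_contDiff hΨ hq hC I).continuous
  have hdpCuc : ∀ I : Fin n,
      Continuous (deriv fun t' => pder (C (q 0 t')) (FVaux.uu Ψ q (0, t')) I) :=
    fun I => (FVaux.pCu_contDiff hΨ hq hC I).continuous_deriv le_rfl
  have hDtθc : ∀ j, Continuous fun t =>
      fderiv ℝ (fun z => FVaux.th Ψ q z j) (0, t) ((0:ℝ),(1:ℝ)) :=
    fun j => FVaux.Dtth_continuous hΨ hq j
  have hΦc : ∀ i j : Fin n, Continuous fun t => Φ (q 0 t) i j := fun i j =>
    (FVaux.Phi_entry_continuous hΨ hΦ i j).comp hcurvec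
  have hhamc : ∀ s p r : Fin n, Continuous fun t => hamel Ψ Φ (q 0 t) s p r :=
    FVaux.hamel_curve_continuous hΨ hΦ hq
  have hAc : Continuous fun t =>
      ∑ i, ((∑ j, pder (fun y => C y (FVaux.uu Ψ q (0, t))) (q 0 t) j * Φ (q 0 t) j i)
        + (∑ I ∈ Finset.univ.filter (fun I : Fin n => m ≤ (I : ℕ)), ∑ k,
            pder (C (q 0 t)) (FVaux.uu Ψ q (0, t)) I * hamel Ψ Φ (q 0 t) I k i
              * FVaux.uu Ψ q (0, t) k)
        + (∑ σ ∈ Finset.univ.filter (fun σ : Fin n => (σ : ℕ) < m), ∑ k,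
            μ σ t * hamel Ψ Φ (q 0 t) σ k i * FVaux.uu Ψ q (0, t) k))
        * FVaux.th Ψ q (0, t) i := by
    refine continuous_finset_sum _ fun i _ => Continuous.mul ?_ (hθc i)
    refine Continuous.add (Continuous.add ?_ ?_) ?_
    · exact continuous_finset_sum _ fun j _ =>
        (FVaux.pCq_continuous hΨ hq hC j).mul (hΦc j i)
    · exact continuous_finset_sum _ fun I _ => continuous_finset_sum _ fun k _ =>
        ((hpCuc I).mul (hhamc I k i)).mul (huc k)
    · exact continuous_finset_sum _ fun σ _ => continuous_finset_sum _ fun k _ =>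
        (((hμ σ).continuous).mul (hhamc σ k i)).mul (huc k)
  have intA := hAc.intervalIntegrable (μ := MeasureTheory.volume) a b
  have intS1 := (continuous_finset_sum (Finset.univ.filter (fun I : Fin n => m ≤ (I : ℕ)))
    (fun I _ => (hpCuc I).fun_mul (hDtθc I))).intervalIntegrable (μ := MeasureTheory.volume) a b
  have intS2 := (continuous_finset_sum (Finset.univ.filter (fun σ : Fin n => (σ : ℕ) < m))
    (fun σ _ => ((hμ σ).continuous).fun_mul (hDtθc σ))).intervalIntegrable (μ := MeasureTheory.volume) a b
  have intS1' := (continuous_finset_sum (Finset.univ.filter (fun I : Fin n => m ≤ (I : ℕ)))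
    (fun I _ => (hdpCuc I).fun_mul (hθc I))).intervalIntegrable (μ := MeasureTheory.volume) a b
  have intS2' := (continuous_finset_sum (Finset.univ.filter (fun σ : Fin n => (σ : ℕ) < m))
    (fun σ _ => (((hμ σ).continuous_deriv le_rfl)).fun_mul (hθc σ))).intervalIntegrable (μ := MeasureTheory.volume) a b
  -- integration by parts
  have hIBP1 : ∀ I : Fin n, (∫ t in a..b, pder (C (q 0 t)) (FVaux.uu Ψ q (0, t)) I
        * fderiv ℝ (fun z => FVaux.th Ψ q z I) (0, t) ((0:ℝ),(1:ℝ)))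
      = - ∫ t in a..b, deriv (fun t' => pder (C (q 0 t')) (FVaux.uu Ψ q (0, t')) I) t
          * FVaux.th Ψ q (0, t) I := by
    intro I
    have hu : ∀ x ∈ Set.uIcc a b,
        HasDerivAt (fun t' => pder (C (q 0 t')) (FVaux.uu Ψ q (0, t')) I)
          (deriv (fun t' => pder (C (q 0 t')) (FVaux.uu Ψ q (0, t')) I) x) x := fun x _ =>
      (((FVaux.pCu_contDiff hΨ hq hC I).differentiable (by norm_num)) x).hasDerivAt
    have hv : ∀ x ∈ Set.uIcc a b, HasDerivAt (fun t' => FVaux.th Ψ q (0, t') I)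
        (fderiv ℝ (fun z => FVaux.th Ψ q z I) (0, x) ((0:ℝ),(1:ℝ))) x := fun x _ =>
      FVaux.hasDerivAt_th_slice hΨ hq x I
    have h := intervalIntegral.integral_mul_deriv_eq_deriv_mul hu hv
      ((hdpCuc I).intervalIntegrable a b) ((hDtθc I).intervalIntegrable a b)
    simp only [FVaux.th_boundary hq (fun s => (hproper s).2) I,
      FVaux.th_boundary hq (fun s => (hproper s).1) I, mul_zero, sub_zero, zero_sub] at h
    simpa using h
  have hIBP2 : ∀ σ : Fin n, (∫ t in a..b, μ σ t
        * fderiv ℝ (fun z => FVaux.th Ψ q z σ) (0, t) ((0:ℝ),(1:ℝ)))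
      = - ∫ t in a..b, deriv (μ σ) t * FVaux.th Ψ q (0, t) σ := by
    intro σ
    have hu : ∀ x ∈ Set.uIcc a b, HasDerivAt (μ σ) (deriv (μ σ) x) x := fun x _ =>
      (((hμ σ).differentiable (by norm_num)) x).hasDerivAt
    have hv : ∀ x ∈ Set.uIcc a b, HasDerivAt (fun t' => FVaux.th Ψ q (0, t') σ)
        (fderiv ℝ (fun z => FVaux.th Ψ q z σ) (0, x) ((0:ℝ),(1:ℝ))) x := fun x _ =>
      FVaux.hasDerivAt_th_slice hΨ hq x σ
    have h := intervalIntegral.integral_mul_deriv_eq_deriv_mul hu hv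
      (((hμ σ).continuous_deriv le_rfl).intervalIntegrable a b)
      ((hDtθc σ).intervalIntegrable a b)
    simp only [FVaux.th_boundary hq (fun s => (hproper s).2) σ,
      FVaux.th_boundary hq (fun s => (hproper s).1) σ, mul_zero, sub_zero, zero_sub] at h
    simpa using h
  -- assemble
  have hR : (∫ t in a..b,
        ((∑ i, ((∑ j, pder (fun y => C y (FVaux.uu Ψ q (0, t))) (q 0 t) j * Φ (q 0 t) j i)
            + (∑ I ∈ Finset.univ.filter (fun I : Fin n => m ≤ (I : ℕ)), ∑ k,
                pder (C (q 0 t)) (FVaux.uu Ψ q (0, t)) I * hamel Ψ Φ (q 0 t) I k i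
                  * FVaux.uu Ψ q (0, t) k)
            + (∑ σ ∈ Finset.univ.filter (fun σ : Fin n => (σ : ℕ) < m), ∑ k,
                μ σ t * hamel Ψ Φ (q 0 t) σ k i * FVaux.uu Ψ q (0, t) k))
          * FVaux.th Ψ q (0, t) i)
        - (∑ I ∈ Finset.univ.filter (fun I : Fin n => m ≤ (I : ℕ)),
            deriv (fun t' => pder (C (q 0 t')) (FVaux.uu Ψ q (0, t')) I) t
              * FVaux.th Ψ q (0, t) I)
        - (∑ σ ∈ Finset.univ.filter (fun σ : Fin n => (σ : ℕ) < m),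
            deriv (μ σ) t * FVaux.th Ψ q (0, t) σ)))
      = (∫ t in a..b,
          ∑ i, ((∑ j, pder (fun y => C y (FVaux.uu Ψ q (0, t))) (q 0 t) j * Φ (q 0 t) j i)
            + (∑ I ∈ Finset.univ.filter (fun I : Fin n => m ≤ (I : ℕ)), ∑ k,
                pder (C (q 0 t)) (FVaux.uu Ψ q (0, t)) I * hamel Ψ Φ (q 0 t) I k i
                  * FVaux.uu Ψ q (0, t) k)
            + (∑ σ ∈ Finset.univ.filter (fun σ : Fin n => (σ : ℕ) < m), ∑ k,
                μ σ t * hamel Ψ Φ (q 0 t) σ k i * FVaux.uu Ψ q (0, t) k))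
            * FVaux.th Ψ q (0, t) i)
        - (∑ I ∈ Finset.univ.filter (fun I : Fin n => m ≤ (I : ℕ)),
            ∫ t in a..b, deriv (fun t' => pder (C (q 0 t')) (FVaux.uu Ψ q (0, t')) I) t
              * FVaux.th Ψ q (0, t) I)
        - (∑ σ ∈ Finset.univ.filter (fun σ : Fin n => (σ : ℕ) < m),
            ∫ t in a..b, deriv (μ σ) t * FVaux.th Ψ q (0, t) σ) := by
    rw [intervalIntegral.integral_sub (intA.sub intS1') intS2',
      intervalIntegral.integral_sub intA intS1',
      intervalIntegral.integral_finset_sum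
        (fun I _ => ((hdpCuc I).fun_mul (hθc I)).intervalIntegrable a b),
      intervalIntegral.integral_finset_sum
        (fun σ _ => (((hμ σ).continuous_deriv le_rfl).fun_mul (hθc σ)).intervalIntegrable a b)]
  rw [hR]
  calc deriv (fun x : ℝ => ∫ t in a..b, F (x, t)) 0
      = ∫ t in a..b, fderiv ℝ F (0, t) ((1:ℝ),(0:ℝ)) := hD
    _ = ∫ t in a..b,
        ((∑ i, ((∑ j, pder (fun y => C y (FVaux.uu Ψ q (0, t))) (q 0 t) j * Φ (q 0 t) j i)
            + (∑ I ∈ Finset.univ.filter (fun I : Fin n => m ≤ (I : ℕ)), ∑ k,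
                pder (C (q 0 t)) (FVaux.uu Ψ q (0, t)) I * hamel Ψ Φ (q 0 t) I k i
                  * FVaux.uu Ψ q (0, t) k)
            + (∑ σ ∈ Finset.univ.filter (fun σ : Fin n => (σ : ℕ) < m), ∑ k,
                μ σ t * hamel Ψ Φ (q 0 t) σ k i * FVaux.uu Ψ q (0, t) k))
          * FVaux.th Ψ q (0, t) i)
        + (∑ I ∈ Finset.univ.filter (fun I : Fin n => m ≤ (I : ℕ)),
            pder (C (q 0 t)) (FVaux.uu Ψ q (0, t)) I
              * fderiv ℝ (fun z => FVaux.th Ψ q z I) (0, t) ((0:ℝ),(1:ℝ)))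
        + (∑ σ ∈ Finset.univ.filter (fun σ : Fin n => (σ : ℕ) < m),
            μ σ t * fderiv ℝ (fun z => FVaux.th Ψ q z σ) (0, t) ((0:ℝ),(1:ℝ)))) :=
        intervalIntegral.integral_congr fun t _ => hpt t
    _ = (∫ t in a..b,
          ∑ i, ((∑ j, pder (fun y => C y (FVaux.uu Ψ q (0, t))) (q 0 t) j * Φ (q 0 t) j i)
            + (∑ I ∈ Finset.univ.filter (fun I : Fin n => m ≤ (I : ℕ)), ∑ k,
                pder (C (q 0 t)) (FVaux.uu Ψ q (0, t)) I * hamel Ψ Φ (q 0 t) I k i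
                  * FVaux.uu Ψ q (0, t) k)
            + (∑ σ ∈ Finset.univ.filter (fun σ : Fin n => (σ : ℕ) < m), ∑ k,
                μ σ t * hamel Ψ Φ (q 0 t) σ k i * FVaux.uu Ψ q (0, t) k))
            * FVaux.th Ψ q (0, t) i)
        + (∫ t in a..b, ∑ I ∈ Finset.univ.filter (fun I : Fin n => m ≤ (I : ℕ)),
            pder (C (q 0 t)) (FVaux.uu Ψ q (0, t)) I
              * fderiv ℝ (fun z => FVaux.th Ψ q z I) (0, t) ((0:ℝ),(1:ℝ)))
        + (∫ t in a..b, ∑ σ ∈ Finset.univ.filter (fun σ : Fin n => (σ : ℕ) < m),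
            μ σ t * fderiv ℝ (fun z => FVaux.th Ψ q z σ) (0, t) ((0:ℝ),(1:ℝ))) := by
        rw [intervalIntegral.integral_add (intA.add intS1) intS2,
          intervalIntegral.integral_add intA intS1]
    _ = (∫ t in a..b,
          ∑ i, ((∑ j, pder (fun y => C y (FVaux.uu Ψ q (0, t))) (q 0 t) j * Φ (q 0 t) j i)
            + (∑ I ∈ Finset.univ.filter (fun I : Fin n => m ≤ (I : ℕ)), ∑ k,
                pder (C (q 0 t)) (FVaux.uu Ψ q (0, t)) I * hamel Ψ Φ (q 0 t) I k i
                  * FVaux.uu Ψ q (0, t) k)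
            + (∑ σ ∈ Finset.univ.filter (fun σ : Fin n => (σ : ℕ) < m), ∑ k,
                μ σ t * hamel Ψ Φ (q 0 t) σ k i * FVaux.uu Ψ q (0, t) k))
            * FVaux.th Ψ q (0, t) i)
        + (∑ I ∈ Finset.univ.filter (fun I : Fin n => m ≤ (I : ℕ)),
            ∫ t in a..b, pder (C (q 0 t)) (FVaux.uu Ψ q (0, t)) I
              * fderiv ℝ (fun z => FVaux.th Ψ q z I) (0, t) ((0:ℝ),(1:ℝ)))
        + (∑ σ ∈ Finset.univ.filter (fun σ : Fin n => (σ : ℕ) < m),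
            ∫ t in a..b, μ σ t * fderiv ℝ (fun z => FVaux.th Ψ q z σ) (0, t) ((0:ℝ),(1:ℝ))) := by
        rw [intervalIntegral.integral_finset_sum
            (fun I _ => ((hpCuc I).fun_mul (hDtθc I)).intervalIntegrable a b),
          intervalIntegral.integral_finset_sum
            (fun σ _ => (((hμ σ).continuous).fun_mul (hDtθc σ)).intervalIntegrable a b)]
    _ = (∫ t in a..b,
          ∑ i, ((∑ j, pder (fun y => C y (FVaux.uu Ψ q (0, t))) (q 0 t) j * Φ (q 0 t) j i)
            + (∑ I ∈ Finset.univ.filter (fun I : Fin n => m ≤ (I : ℕ)), ∑ k,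
                pder (C (q 0 t)) (FVaux.uu Ψ q (0, t)) I * hamel Ψ Φ (q 0 t) I k i
                  * FVaux.uu Ψ q (0, t) k)
            + (∑ σ ∈ Finset.univ.filter (fun σ : Fin n => (σ : ℕ) < m), ∑ k,
                μ σ t * hamel Ψ Φ (q 0 t) σ k i * FVaux.uu Ψ q (0, t) k))
            * FVaux.th Ψ q (0, t) i)
        - (∑ I ∈ Finset.univ.filter (fun I : Fin n => m ≤ (I : ℕ)),
            ∫ t in a..b, deriv (fun t' => pder (C (q 0 t')) (FVaux.uu Ψ q (0, t')) I) t
              * FVaux.th Ψ q (0, t) I)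
        - (∑ σ ∈ Finset.univ.filter (fun σ : Fin n => (σ : ℕ) < m),
            ∫ t in a..b, deriv (μ σ) t * FVaux.th Ψ q (0, t) σ) := by
        rw [Finset.sum_congr rfl (fun I _ => hIBP1 I),
          Finset.sum_congr rfl (fun σ _ => hIBP2 σ),
          Finset.sum_neg_distrib, Finset.sum_neg_distrib]
        ring

end
end

section
/- Boltzmann–Hamel equations for the kinematic optimal control problem (sufficiency): Let C : ℝⁿ × ℝⁿ → ℝ be C² with ∂C/∂u^σ = 0 for all σ ∈ {1,…,m}. Suppose a C² curve γ : [a,b] → ℝⁿ with quasi-velocities u and C¹ multipliers μ_σ : [a,b] → ℝ satisfies: (i) d/dt(∂C/∂u^I) − (∂C/∂q^j)Φ^j_I − (∂C/∂u^J) γ^J_{SI} u^S = μ_τ γ^τ_{SI} u^S for all I ∈ {m+1,…,n}; (ii) −(∂C/∂q^j)Φ^j_σ − (∂C/∂u^J) γ^J_{Sσ} u^S = −μ̇_σ + μ_τ γ^τ_{Sσ} u^S for all σ ∈ {1,…,m}; (iii) γ̇^i = Φ^i_S u^S (equivalently u^σ = 0). Then for every proper C² variation q(s,t) of γ, the first variation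 of the augmented cost vanishes: d/ds|_{s=0} ∫_a^b [ C(q(s,t), u(s,t)) + μ_σ(t) u^σ(s,t) ] dt = 0. -/
open Matrix Real Finset

noncomputable section

/-- Quasi-velocities `u^j(t) = Ψ^j_i(γ(t)) γ̇^i(t)` of a curve `γ`. -/
def cvel {n : ℕ} (Ψ : (Fin n → ℝ) → Matrix (Fin n) (Fin n) ℝ)
    (γ : ℝ → Fin n → ℝ) (t : ℝ) : Fin n → ℝ :=
  fun j => ∑ i, Ψ (γ t) j i * deriv (fun t' => γ t' i) t

/-! ### Auxiliary lemmas -/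

lemma pi_clm_apply {n : ℕ} (L : (Fin n → ℝ) →L[ℝ] ℝ) (y : Fin n → ℝ) :
    L y = ∑ k, y k * L (Pi.single k 1) := by
  have h : y = ∑ k, y k • (Pi.single k 1 : Fin n → ℝ) := by
    funext j
    simp [Pi.single_apply, Finset.sum_apply]
  nth_rewrite 1 [h]
  rw [map_sum]
  simp [smul_eq_mul]

lemma prod_clm_apply {n : ℕ} (L : ((Fin n → ℝ) × (Fin n → ℝ)) →L[ℝ] ℝ) (y z : Fin n → ℝ) :
    L (y, z) = ∑ i, y i * L (Pi.single i 1, 0) + ∑ j, z j * L (0, Pi.single j 1) := by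
  have h : ((y, z) : (Fin n → ℝ) × (Fin n → ℝ)) = (y, 0) + (0, z) := by simp
  rw [h, map_add]
  congr 1
  · exact pi_clm_apply (L.comp (ContinuousLinearMap.inl ℝ _ _)) y
  · exact pi_clm_apply (L.comp (ContinuousLinearMap.inr ℝ _ _)) z

lemma hasDerivAt_comp_pi {n : ℕ} {g : (Fin n → ℝ) → ℝ} {X : ℝ → Fin n → ℝ} {x₀ : ℝ}
    {δ : Fin n → ℝ} (hg : DifferentiableAt ℝ g (X x₀)) (hX : HasDerivAt X δ x₀) :
    HasDerivAt (fun s => g (X s)) (∑ k, δ k * pder g (X x₀) k) x₀ := by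
  have h2 := hg.hasFDerivAt.comp_hasDerivAt x₀ hX
  have h3 : fderiv ℝ g (X x₀) δ = ∑ k, δ k * pder g (X x₀) k := by
    rw [pi_clm_apply]; rfl
  rwa [h3] at h2

lemma pder_fst {n : ℕ} {C : (Fin n → ℝ) → (Fin n → ℝ) → ℝ} {x v : Fin n → ℝ}
    (hC : DifferentiableAt ℝ (fun p : (Fin n → ℝ) × (Fin n → ℝ) => C p.1 p.2) (x, v))
    (i : Fin n) :
    pder (fun y => C y v) x i
      = fderiv ℝ (fun p : (Fin n → ℝ) × (Fin n → ℝ) => C p.1 p.2) (x, v) (Pi.single i 1, 0) := by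
  have h : HasFDerivAt (fun y => C y v)
      ((fderiv ℝ (fun p : (Fin n → ℝ) × (Fin n → ℝ) => C p.1 p.2) (x, v)).comp
        (ContinuousLinearMap.inl ℝ _ _)) x :=
    HasFDerivAt.comp (g := fun p : (Fin n → ℝ) × (Fin n → ℝ) => C p.1 p.2) x hC.hasFDerivAt (hasFDerivAt_prodMk_left (𝕜 := ℝ) x v)
  rw [pder, h.fderiv]
  rfl

lemma pder_snd {n : ℕ} {C : (Fin n → ℝ) → (Fin n → ℝ) → ℝ} {x v : Fin n → ℝ}
    (hC : DifferentiableAt ℝ (fun p : (Fin n → ℝ) × (Fin n → ℝ) => C p.1 p.2) (x, v))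
    (j : Fin n) :
    pder (C x) v j
      = fderiv ℝ (fun p : (Fin n → ℝ) × (Fin n → ℝ) => C p.1 p.2) (x, v) (0, Pi.single j 1) := by
  have h : HasFDerivAt (fun w => C x w)
      ((fderiv ℝ (fun p : (Fin n → ℝ) × (Fin n → ℝ) => C p.1 p.2) (x, v)).comp
        (ContinuousLinearMap.inr ℝ _ _)) v :=
    HasFDerivAt.comp (g := fun p : (Fin n → ℝ) × (Fin n → ℝ) => C p.1 p.2) v hC.hasFDerivAt (hasFDerivAt_prodMk_right (𝕜 := ℝ) x v)
  rw [pder, h.fderiv]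
  rfl

section slices
variable {E : Type*} [NormedAddCommGroup E] [NormedSpace ℝ E]

lemma hasDerivAt_slice_t {f : ℝ × ℝ → E} {s t : ℝ} (hf : DifferentiableAt ℝ f (s, t)) :
    HasDerivAt (fun t' => f (s, t')) (fderiv ℝ f (s, t) (0, 1)) t := by
  have h1 : HasDerivAt (fun t' : ℝ => ((s, t') : ℝ × ℝ)) ((0 : ℝ), (1 : ℝ)) t :=
    (hasDerivAt_const t s).prodMk (hasDerivAt_id t)
  exact hf.hasFDerivAt.comp_hasDerivAt t h1

lemma hasDerivAt_slice_s {f : ℝ × ℝ → E} {s t : ℝ} (hf : DifferentiableAt ℝ f (s, t)) :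
    HasDerivAt (fun s' => f (s', t)) (fderiv ℝ f (s, t) (1, 0)) s := by
  have h1 : HasDerivAt (fun s' : ℝ => ((s', t) : ℝ × ℝ)) ((1 : ℝ), (0 : ℝ)) s :=
    (hasDerivAt_id s).prodMk (hasDerivAt_const s t)
  exact hf.hasFDerivAt.comp_hasDerivAt s h1

lemma mixed_hasDerivAt_s {f : ℝ × ℝ → E} (hf : ContDiff ℝ 2 f) (s t : ℝ) :
    HasDerivAt (fun s' => fderiv ℝ f (s', t) (0, 1))
      (fderiv ℝ (fderiv ℝ f) (s, t) (1, 0) (0, 1)) s := by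
  have hd : HasFDerivAt (fderiv ℝ f) (fderiv ℝ (fderiv ℝ f) (s, t)) (s, t) :=
    (((hf.fderiv_right (le_refl 2)).differentiable one_ne_zero) (s, t)).hasFDerivAt
  have h2 : HasFDerivAt (fun p => fderiv ℝ f p (0, 1))
      ((ContinuousLinearMap.apply ℝ E ((0:ℝ), (1:ℝ))).comp (fderiv ℝ (fderiv ℝ f) (s, t)))
      (s, t) := (ContinuousLinearMap.apply ℝ E ((0:ℝ),(1:ℝ))).hasFDerivAt.comp (s, t) hd
  have h1 : HasDerivAt (fun s' : ℝ => ((s', t) : ℝ × ℝ)) ((1 : ℝ), (0 : ℝ)) s :=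
    (hasDerivAt_id s).prodMk (hasDerivAt_const s t)
  exact h2.comp_hasDerivAt s h1

lemma mixed_hasDerivAt_t {f : ℝ × ℝ → E} (hf : ContDiff ℝ 2 f) (s t : ℝ) :
    HasDerivAt (fun t' => fderiv ℝ f (s, t') (1, 0))
      (fderiv ℝ (fderiv ℝ f) (s, t) (1, 0) (0, 1)) t := by
  have hd : HasFDerivAt (fderiv ℝ f) (fderiv ℝ (fderiv ℝ f) (s, t)) (s, t) :=
    (((hf.fderiv_right (le_refl 2)).differentiable one_ne_zero) (s, t)).hasFDerivAt
  have hsym : fderiv ℝ (fderiv ℝ f) (s, t) (0, 1) (1, 0)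
      = fderiv ℝ (fderiv ℝ f) (s, t) (1, 0) (0, 1) :=
    second_derivative_symmetric
      (fun y => ((hf.differentiable two_ne_zero) y).hasFDerivAt) hd _ _
  have h2 : HasFDerivAt (fun p => fderiv ℝ f p (1, 0))
      ((ContinuousLinearMap.apply ℝ E ((1:ℝ), (0:ℝ))).comp (fderiv ℝ (fderiv ℝ f) (s, t)))
      (s, t) := (ContinuousLinearMap.apply ℝ E ((1:ℝ),(0:ℝ))).hasFDerivAt.comp (s, t) hd
  have h1 : HasDerivAt (fun t' : ℝ => ((s, t') : ℝ × ℝ)) ((0 : ℝ), (1 : ℝ)) t :=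
    (hasDerivAt_const t s).prodMk (hasDerivAt_id t)
  have := h2.comp_hasDerivAt t h1
  simpa [hsym, Function.comp_def] using this

lemma contDiff_fderiv_apply {f : ℝ × ℝ → E} (hf : ContDiff ℝ 2 f) (v : ℝ × ℝ) :
    ContDiff ℝ 1 (fun p => fderiv ℝ f p v) :=
  (hf.fderiv_right (le_refl 2)).clm_apply contDiff_const

end slices

namespace BH
variable {n : ℕ}

def vd (q : ℝ → ℝ → Fin n → ℝ) (i : Fin n) (p : ℝ × ℝ) : ℝ :=
  fderiv ℝ (fun p : ℝ × ℝ => q p.1 p.2 i) p (0, 1)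

def sd (q : ℝ → ℝ → Fin n → ℝ) (i : Fin n) (p : ℝ × ℝ) : ℝ :=
  fderiv ℝ (fun p : ℝ × ℝ => q p.1 p.2 i) p (1, 0)

def md (q : ℝ → ℝ → Fin n → ℝ) (i : Fin n) (p : ℝ × ℝ) : ℝ :=
  fderiv ℝ (fderiv ℝ (fun p : ℝ × ℝ => q p.1 p.2 i)) p (1, 0) (0, 1)

def Uu (Ψ : (Fin n → ℝ) → Matrix (Fin n) (Fin n) ℝ) (q : ℝ → ℝ → Fin n → ℝ)
    (p : ℝ × ℝ) : Fin n → ℝ :=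
  fun j => ∑ i, Ψ (q p.1 p.2) j i * vd q i p

def Hh (m : ℕ) (Ψ : (Fin n → ℝ) → Matrix (Fin n) (Fin n) ℝ)
    (C : (Fin n → ℝ) → (Fin n → ℝ) → ℝ) (μ : Fin n → ℝ → ℝ)
    (q : ℝ → ℝ → Fin n → ℝ) (p : ℝ × ℝ) : ℝ :=
  C (q p.1 p.2) (Uu Ψ q p)
    + ∑ σ ∈ Finset.univ.filter (fun σ : Fin n => (σ : ℕ) < m), μ σ p.2 * Uu Ψ q p σ

variable {q : ℝ → ℝ → Fin n → ℝ} (hq : ContDiff ℝ 2 (fun p : ℝ × ℝ => q p.1 p.2))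
include hq

lemma hQi (i : Fin n) : ContDiff ℝ 2 (fun p : ℝ × ℝ => q p.1 p.2 i) :=
  contDiff_pi.mp hq i

lemma vd_eq (s t : ℝ) (i : Fin n) : deriv (fun t' => q s t' i) t = vd q i (s, t) :=
  (hasDerivAt_slice_t (((hQi hq i).differentiable two_ne_zero) (s, t))).deriv

lemma sd_eq (s t : ℝ) (i : Fin n) : deriv (fun s' => q s' t i) s = sd q i (s, t) :=
  (hasDerivAt_slice_s (((hQi hq i).differentiable two_ne_zero) (s, t))).deriv

lemma vd_contDiff (i : Fin n) : ContDiff ℝ 1 (vd q i) :=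
  contDiff_fderiv_apply (hQi hq i) _

lemma vd_hasDerivAt_s (s t : ℝ) (i : Fin n) :
    HasDerivAt (fun s' => vd q i (s', t)) (md q i (s, t)) s :=
  mixed_hasDerivAt_s (hQi hq i) s t

lemma sd_hasDerivAt_t (s t : ℝ) (i : Fin n) :
    HasDerivAt (fun t' => sd q i (s, t')) (md q i (s, t)) t :=
  mixed_hasDerivAt_t (hQi hq i) s t

lemma q_hasDerivAt_s (s t : ℝ) :
    HasDerivAt (fun s' => q s' t) (fun i => sd q i (s, t)) s :=
  hasDerivAt_pi.mpr fun i =>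
    hasDerivAt_slice_s (((hQi hq i).differentiable two_ne_zero) (s, t))

lemma qvel_eq {Ψ : (Fin n → ℝ) → Matrix (Fin n) (Fin n) ℝ} (s t : ℝ) :
    qvel Ψ q s t = Uu Ψ q (s, t) := by
  funext j
  exact Finset.sum_congr rfl fun i _ => by rw [vd_eq hq s t i]

lemma Uu_contDiff {Ψ : (Fin n → ℝ) → Matrix (Fin n) (Fin n) ℝ}
    (hΨ : ∀ i j : Fin n, ContDiff ℝ (⊤ : ℕ∞) (fun x => Ψ x i j)) :
    ContDiff ℝ 1 (Uu Ψ q) :=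
  contDiff_pi.mpr fun j => ContDiff.sum fun i _ =>
    (((hΨ j i).of_le (by simp)).comp (hq.of_le one_le_two)).mul (vd_contDiff hq i)

lemma Hh_contDiff {m : ℕ} {Ψ : (Fin n → ℝ) → Matrix (Fin n) (Fin n) ℝ}
    {C : (Fin n → ℝ) → (Fin n → ℝ) → ℝ} {μ : Fin n → ℝ → ℝ}
    (hΨ : ∀ i j : Fin n, ContDiff ℝ (⊤ : ℕ∞) (fun x => Ψ x i j))
    (hC : ContDiff ℝ 2 (fun p : (Fin n → ℝ) × (Fin n → ℝ) => C p.1 p.2))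
    (hμ : ∀ σ : Fin n, ContDiff ℝ 1 (μ σ)) :
    ContDiff ℝ 1 (Hh m Ψ C μ q) := by
  apply ContDiff.add
  · exact (hC.of_le one_le_two).comp ((hq.of_le one_le_two).prodMk (Uu_contDiff hq hΨ))
  · exact ContDiff.sum fun σ _ =>
      ((hμ σ).comp contDiff_snd).mul (contDiff_pi.mp (Uu_contDiff hq hΨ) σ)

end BH

/-- Differentiation under the interval integral for a jointly `C¹` integrand. -/
lemma hasDerivAt_intervalIntegral_of_contDiff {H : ℝ × ℝ → ℝ} (hH : ContDiff ℝ 1 H)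
    (a b : ℝ) :
    HasDerivAt (fun s => ∫ t in a..b, H (s, t))
      (∫ t in a..b, fderiv ℝ H (0, t) (1, 0)) 0 := by
  have hF'c : Continuous (fun p : ℝ × ℝ => fderiv ℝ H p (1, 0)) :=
    (ContinuousLinearMap.apply ℝ ℝ ((1:ℝ), (0:ℝ))).continuous.comp
      (hH.continuous_fderiv one_ne_zero)
  have hK : IsCompact ((Metric.closedBall (0:ℝ) 1) ×ˢ Set.uIcc a b) :=
    (isCompact_closedBall 0 1).prod isCompact_uIcc
  obtain ⟨M, hM⟩ := hK.exists_bound_of_continuousOn hF'c.continuousOn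
  have main := intervalIntegral.hasDerivAt_integral_of_dominated_loc_of_deriv_le
    (F := fun s t => H (s, t)) (F' := fun s t => fderiv ℝ H (s, t) (1, 0))
    (x₀ := (0:ℝ)) (bound := fun _ => M) (a := a) (b := b) (μ := MeasureTheory.volume)
    (Metric.ball_mem_nhds 0 one_pos)
    (Filter.Eventually.of_forall fun x =>
      ((hH.continuous.comp (continuous_const.prodMk continuous_id)).aestronglyMeasurable))
    ((hH.continuous.comp (continuous_const.prodMk continuous_id)).intervalIntegrable a b)
    ((hF'c.comp (continuous_const.prodMk continuous_id)).aestronglyMeasurable)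
    (Filter.Eventually.of_forall fun t ht x hx => by
      exact hM (x, t) ⟨Metric.ball_subset_closedBall hx, Set.uIoc_subset_uIcc ht⟩)
    intervalIntegrable_const
    (Filter.Eventually.of_forall fun t _ x _ =>
      hasDerivAt_slice_s (hH.differentiable one_ne_zero (x, t)))
  exact main.2

lemma alg {n m : ℕ} (Ψx Φx : Matrix (Fin n) (Fin n) ℝ) (hΦΨ : Φx * Ψx = 1)
    (P : Fin n → Fin n → Fin n → ℝ)
    (ham : Fin n → Fin n → Fin n → ℝ)
    (hham : ∀ j p r, ham j p r = ∑ i, ∑ k, (P j i k - P j k i) * Φx i p * Φx k r)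
    (v δ γ' Pq Pu μt c' mdv : Fin n → ℝ)
    (hγ' : ∀ i, γ' i = ∑ S ∈ Finset.univ.filter (fun S : Fin n => m ≤ (S:ℕ)), Φx i S * v S)
    (hPu0 : ∀ σ : Fin n, (σ:ℕ) < m → Pu σ = 0)
    (hI : ∀ I : Fin n, m ≤ (I:ℕ) →
      c' I - (∑ j, Pq j * Φx j I)
        - (∑ J ∈ Finset.univ.filter (fun J : Fin n => m ≤ (J:ℕ)),
            ∑ S ∈ Finset.univ.filter (fun S : Fin n => m ≤ (S:ℕ)),
            Pu J * ham J S I * v S)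
      = ∑ τ ∈ Finset.univ.filter (fun τ : Fin n => (τ:ℕ) < m),
          ∑ S ∈ Finset.univ.filter (fun S : Fin n => m ≤ (S:ℕ)), μt τ * ham τ S I * v S)
    (hII : ∀ σ : Fin n, (σ:ℕ) < m →
      - (∑ j, Pq j * Φx j σ)
        - (∑ J ∈ Finset.univ.filter (fun J : Fin n => m ≤ (J:ℕ)),
            ∑ S ∈ Finset.univ.filter (fun S : Fin n => m ≤ (S:ℕ)),
            Pu J * ham J S σ * v S)
      = - c' σ + ∑ τ ∈ Finset.univ.filter (fun τ : Fin n => (τ:ℕ) < m),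
          ∑ S ∈ Finset.univ.filter (fun S : Fin n => m ≤ (S:ℕ)), μt τ * ham τ S σ * v S) :
    (∑ i, δ i * Pq i)
      + (∑ j, (∑ i, ((∑ k, P j i k * δ k) * γ' i + Ψx j i * mdv i)) * Pu j)
      + (∑ σ ∈ Finset.univ.filter (fun σ : Fin n => (σ:ℕ) < m),
          μt σ * (∑ i, ((∑ k, P σ i k * δ k) * γ' i + Ψx σ i * mdv i)))
    = ∑ j, (c' j * (∑ i, Ψx j i * δ i)
        + (if (j:ℕ) < m then μt j else Pu j)
          * (∑ i, ((∑ k, P j i k * γ' k) * δ i + Ψx j i * mdv i))) := by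
  classical
  set A : Finset (Fin n) := Finset.univ.filter (fun j : Fin n => (j:ℕ) < m) with hA
  set B : Finset (Fin n) := Finset.univ.filter (fun j : Fin n => m ≤ (j:ℕ)) with hB
  set w : Fin n → ℝ := fun j => ∑ i, ((∑ k, P j i k * δ k) * γ' i + Ψx j i * mdv i) with hw
  set Θ : Fin n → ℝ := fun j => ∑ i, ((∑ k, P j i k * γ' k) * δ i + Ψx j i * mdv i) with hΘ
  set θ : Fin n → ℝ := fun r => ∑ i, Ψx r i * δ i with hθ
  set c : Fin n → ℝ := fun j => if (j:ℕ) < m then μt j else Pu j with hc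
  -- B is the complement of A
  have hABcompl : B = Finset.univ.filter (fun j : Fin n => ¬ (j:ℕ) < m) := by
    simp [hA, hB, not_lt]
  -- δ recovery from θ
  have hδ : ∀ k, δ k = ∑ r, Φx k r * θ r := by
    intro k
    have : ∑ r, Φx k r * θ r = ∑ i, (Φx * Ψx) k i * δ i := by
      simp only [hθ, Finset.mul_sum, Matrix.mul_apply]
      rw [Finset.sum_comm]
      apply Finset.sum_congr rfl; intro i _
      rw [Finset.sum_mul]
      apply Finset.sum_congr rfl; intro r _
      ring
    rw [this, hΦΨ]
    simp [Matrix.one_apply]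
  -- Step 1 : second + third terms of LHS = ∑ j, c j * w j
  have step1 : (∑ j, w j * Pu j) + (∑ σ ∈ A, μt σ * w σ) = ∑ j, c j * w j := by
    rw [← Finset.sum_filter_add_sum_filter_not Finset.univ (fun j : Fin n => (j:ℕ) < m)
      (fun j => c j * w j)]
    have h1 : ∑ j ∈ A, c j * w j = ∑ j ∈ A, μt j * w j := by
      apply Finset.sum_congr rfl; intro j hj
      simp only [hA, Finset.mem_filter] at hj
      simp [hc, hj.2]
    have h2 : ∑ j ∈ Finset.univ.filter (fun j : Fin n => ¬ (j:ℕ) < m), c j * w j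
        = ∑ j ∈ Finset.univ.filter (fun j : Fin n => ¬ (j:ℕ) < m), w j * Pu j := by
      apply Finset.sum_congr rfl; intro j hj
      simp only [Finset.mem_filter] at hj
      simp [hc, hj.2, mul_comm]
    have h3 : ∑ j, w j * Pu j
        = ∑ j ∈ Finset.univ.filter (fun j : Fin n => ¬ (j:ℕ) < m), w j * Pu j := by
      rw [← Finset.sum_filter_add_sum_filter_not Finset.univ (fun j : Fin n => (j:ℕ) < m)
        (fun j => w j * Pu j)]
      have : ∑ j ∈ A, w j * Pu j = 0 := by
        apply Finset.sum_eq_zero; intro j hj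
        simp only [hA, Finset.mem_filter] at hj
        simp [hPu0 j hj.2]
      rw [← hA, this, zero_add]
    rw [h1, h2, h3]
    ring
  -- Step 2 : the key transpositional identity
  have key : ∀ j, w j - Θ j = ∑ S ∈ B, ∑ r, ham j S r * v S * θ r := by
    intro j
    have e1 : w j - Θ j = ∑ i, ∑ k, (P j i k - P j k i) * δ k * γ' i := by
      rw [hw, hΘ, ← Finset.sum_sub_distrib]
      have e2 : ∀ i, ((∑ k, P j i k * δ k) * γ' i + Ψx j i * mdv i)
          - ((∑ k, P j i k * γ' k) * δ i + Ψx j i * mdv i)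
          = (∑ k, P j i k * δ k * γ' i) - (∑ k, P j i k * γ' k * δ i) := by
        intro i
        rw [← Finset.sum_mul, ← Finset.sum_mul]
        ring
      rw [Finset.sum_congr rfl fun i _ => e2 i]
      have e3 : ∑ i, ∑ k, P j i k * γ' k * δ i = ∑ i, ∑ k, P j k i * δ k * γ' i := by
        rw [Finset.sum_comm]
        apply Finset.sum_congr rfl; intro i _
        apply Finset.sum_congr rfl; intro k _
        ring
      rw [Finset.sum_congr rfl fun i _ => rfl]
      simp only [← Finset.sum_sub_distrib]
      rw [show (∑ i, ∑ k, (P j i k * δ k * γ' i - P j i k * γ' k * δ i))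
          = (∑ i, ∑ k, P j i k * δ k * γ' i) - (∑ i, ∑ k, P j i k * γ' k * δ i) by
        simp [Finset.sum_sub_distrib]]
      rw [e3]
      simp only [← Finset.sum_sub_distrib]
      apply Finset.sum_congr rfl; intro i _
      apply Finset.sum_congr rfl; intro k _
      ring
    rw [e1]
    -- substitute γ' and δ
    have e4 : ∀ i k, (P j i k - P j k i) * δ k * γ' i
        = ∑ S ∈ B, ∑ r, (P j i k - P j k i) * Φx i S * Φx k r * v S * θ r := by
      intro i k
      rw [hγ' i, hδ k, Finset.mul_sum]
      apply Finset.sum_congr rfl; intro S _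
      rw [Finset.mul_sum, Finset.sum_mul]
      apply Finset.sum_congr rfl; intro r _
      ring
    rw [Finset.sum_congr rfl fun i _ => Finset.sum_congr rfl fun k _ => e4 i k]
    have e6 : ∑ i, ∑ k, ∑ S ∈ B, ∑ r, (P j i k - P j k i) * Φx i S * Φx k r * v S * θ r
        = ∑ S ∈ B, ∑ r, ∑ i, ∑ k, (P j i k - P j k i) * Φx i S * Φx k r * v S * θ r := by
      calc ∑ i, ∑ k, ∑ S ∈ B, ∑ r, (P j i k - P j k i) * Φx i S * Φx k r * v S * θ r
          = ∑ i, ∑ S ∈ B, ∑ k, ∑ r, (P j i k - P j k i) * Φx i S * Φx k r * v S * θ r :=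
            Finset.sum_congr rfl fun i _ => Finset.sum_comm
        _ = ∑ S ∈ B, ∑ i, ∑ k, ∑ r, (P j i k - P j k i) * Φx i S * Φx k r * v S * θ r :=
            Finset.sum_comm
        _ = ∑ S ∈ B, ∑ i, ∑ r, ∑ k, (P j i k - P j k i) * Φx i S * Φx k r * v S * θ r :=
            Finset.sum_congr rfl fun S _ => Finset.sum_congr rfl fun i _ => Finset.sum_comm
        _ = ∑ S ∈ B, ∑ r, ∑ i, ∑ k, (P j i k - P j k i) * Φx i S * Φx k r * v S * θ r :=
            Finset.sum_congr rfl fun S _ => Finset.sum_comm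
    rw [e6]
    apply Finset.sum_congr rfl; intro S _
    apply Finset.sum_congr rfl; intro r _
    rw [hham j S r, Finset.sum_mul, Finset.sum_mul]
    apply Finset.sum_congr rfl; intro i _
    rw [Finset.sum_mul, Finset.sum_mul]
  -- Step 3 : assemble
  have E1 : ∑ i, δ i * Pq i = ∑ r, (∑ i, Pq i * Φx i r) * θ r := by
    calc ∑ i, δ i * Pq i = ∑ i, ∑ r, Φx i r * θ r * Pq i := by
          apply Finset.sum_congr rfl; intro i _
          rw [hδ i, Finset.sum_mul]
      _ = ∑ r, ∑ i, Φx i r * θ r * Pq i := Finset.sum_comm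
      _ = ∑ r, (∑ i, Pq i * Φx i r) * θ r := by
          apply Finset.sum_congr rfl; intro r _
          rw [Finset.sum_mul]
          apply Finset.sum_congr rfl; intro i _
          ring
  have E2 : ∑ j, c j * (w j - Θ j) = ∑ r, (∑ j, ∑ S ∈ B, c j * ham j S r * v S) * θ r := by
    calc ∑ j, c j * (w j - Θ j)
        = ∑ j, ∑ S ∈ B, ∑ r, c j * (ham j S r * v S * θ r) := by
          apply Finset.sum_congr rfl; intro j _
          rw [key j, Finset.mul_sum]
          exact Finset.sum_congr rfl fun S _ => by rw [Finset.mul_sum]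
      _ = ∑ j, ∑ r, ∑ S ∈ B, c j * (ham j S r * v S * θ r) :=
          Finset.sum_congr rfl fun j _ => Finset.sum_comm
      _ = ∑ r, ∑ j, ∑ S ∈ B, c j * (ham j S r * v S * θ r) := Finset.sum_comm
      _ = ∑ r, (∑ j, ∑ S ∈ B, c j * ham j S r * v S) * θ r := by
          apply Finset.sum_congr rfl; intro r _
          rw [Finset.sum_mul]
          apply Finset.sum_congr rfl; intro jj _
          rw [Finset.sum_mul]
          apply Finset.sum_congr rfl; intro S _
          ring
  have E3 : ∀ r, (∑ i, Pq i * Φx i r) + (∑ j, ∑ S ∈ B, c j * ham j S r * v S) = c' r := by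
    intro r
    have hsplit : ∑ j, ∑ S ∈ B, c j * ham j S r * v S
        = (∑ τ ∈ A, ∑ S ∈ B, μt τ * ham τ S r * v S)
          + (∑ J ∈ B, ∑ S ∈ B, Pu J * ham J S r * v S) := by
      rw [← Finset.sum_filter_add_sum_filter_not Finset.univ (fun j : Fin n => (j:ℕ) < m)
        (fun j => ∑ S ∈ B, c j * ham j S r * v S), ← hA, ← hABcompl]
      congr 1
      · apply Finset.sum_congr rfl; intro τ hτ
        simp only [hA, Finset.mem_filter] at hτ
        apply Finset.sum_congr rfl; intro S _
        simp [hc, hτ.2]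
      · apply Finset.sum_congr rfl; intro J hJ
        simp only [hB, Finset.mem_filter] at hJ
        apply Finset.sum_congr rfl; intro S _
        simp [hc, not_lt.mpr hJ.2]
    rw [hsplit]
    by_cases hr : (r:ℕ) < m
    · have h := hII r hr
      linarith
    · have h := hI r (not_lt.mp hr)
      linarith
  have hfinal : (∑ i, δ i * Pq i) + (∑ j, w j * Pu j) + (∑ σ ∈ A, μt σ * w σ)
      = ∑ j, (c' j * θ j + c j * Θ j) := by
    rw [add_assoc, step1]
    have hsplit2 : ∑ j, c j * w j = (∑ j, c j * Θ j) + ∑ j, c j * (w j - Θ j) := by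
      rw [← Finset.sum_add_distrib]
      apply Finset.sum_congr rfl; intro j _
      ring
    rw [hsplit2, E1, E2]
    have : (∑ r, (∑ i, Pq i * Φx i r) * θ r)
        + (∑ r, (∑ j, ∑ S ∈ B, c j * ham j S r * v S) * θ r) = ∑ r, c' r * θ r := by
      rw [← Finset.sum_add_distrib]
      apply Finset.sum_congr rfl; intro r _
      rw [← add_mul, E3 r]
    rw [Finset.sum_add_distrib]
    linarith [this]
  exact hfinal




/-- **Boltzmann–Hamel equations for the kinematic optimal control problem (sufficiency).**
If a curve with multipliers satisfies the kinematic optimal control Boltzmann–Hamel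
equations (i), the multiplier equations (ii), and the kinematic relations (iii),
then the first variation of the augmented cost vanishes for every proper variation. -/
theorem kinematic_optimal_control_boltzmann_hamel {n m : ℕ}
    (hm : m < n)
    (Ψ Φ : (Fin n → ℝ) → Matrix (Fin n) (Fin n) ℝ)
    (hΨ : ∀ i j : Fin n, ContDiff ℝ (⊤ : ℕ∞) (fun x => Ψ x i j))
    (hΦ : ∀ x, Ψ x * Φ x = 1 ∧ Φ x * Ψ x = 1)
    (C : (Fin n → ℝ) → (Fin n → ℝ) → ℝ)
    (hC : ContDiff ℝ 2 (fun p : (Fin n → ℝ) × (Fin n → ℝ) => C p.1 p.2))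
    (hCu : ∀ (x v : Fin n → ℝ) (σ : Fin n), (σ : ℕ) < m → pder (C x) v σ = 0)
    (a b : ℝ) (hab : a < b)
    (γ : ℝ → Fin n → ℝ) (hγ : ContDiff ℝ 2 γ)
    (μ : Fin n → ℝ → ℝ) (hμ : ∀ σ : Fin n, ContDiff ℝ 1 (μ σ))
    -- (i) the Boltzmann–Hamel equations for the unconstrained indices
    (hi : ∀ t, ∀ I : Fin n, m ≤ (I : ℕ) →
      deriv (fun t' => pder (C (γ t')) (cvel Ψ γ t') I) t
        - (∑ j, pder (fun y => C y (cvel Ψ γ t)) (γ t) j * Φ (γ t) j I)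
        - (∑ J ∈ Finset.univ.filter (fun J : Fin n => m ≤ (J : ℕ)),
            ∑ S ∈ Finset.univ.filter (fun S : Fin n => m ≤ (S : ℕ)),
            pder (C (γ t)) (cvel Ψ γ t) J * hamel Ψ Φ (γ t) J S I * cvel Ψ γ t S)
      = ∑ τ ∈ Finset.univ.filter (fun τ : Fin n => (τ : ℕ) < m),
          ∑ S ∈ Finset.univ.filter (fun S : Fin n => m ≤ (S : ℕ)),
          μ τ t * hamel Ψ Φ (γ t) τ S I * cvel Ψ γ t S)
    -- (ii) the multiplier equations for the constrained indices
    (hii : ∀ t, ∀ σ : Fin n, (σ : ℕ) < m →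
      - (∑ j, pder (fun y => C y (cvel Ψ γ t)) (γ t) j * Φ (γ t) j σ)
        - (∑ J ∈ Finset.univ.filter (fun J : Fin n => m ≤ (J : ℕ)),
            ∑ S ∈ Finset.univ.filter (fun S : Fin n => m ≤ (S : ℕ)),
            pder (C (γ t)) (cvel Ψ γ t) J * hamel Ψ Φ (γ t) J S σ * cvel Ψ γ t S)
      = - deriv (μ σ) t
          + ∑ τ ∈ Finset.univ.filter (fun τ : Fin n => (τ : ℕ) < m),
              ∑ S ∈ Finset.univ.filter (fun S : Fin n => m ≤ (S : ℕ)),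
              μ τ t * hamel Ψ Φ (γ t) τ S σ * cvel Ψ γ t S)
    -- (iii) the kinematic relations `γ̇^i = Φ^i_S u^S` (equivalently `u^σ = 0`)
    (hiii : ∀ t, ∀ i : Fin n,
      deriv (fun t' => γ t' i) t
        = ∑ S ∈ Finset.univ.filter (fun S : Fin n => m ≤ (S : ℕ)),
            Φ (γ t) i S * cvel Ψ γ t S) :
    -- then: the first variation of the augmented cost vanishes for every proper variation
    ∀ q : ℝ → ℝ → Fin n → ℝ,
      ContDiff ℝ 2 (fun p : ℝ × ℝ => q p.1 p.2) →
      (∀ t, q 0 t = γ t) →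
      (∀ s, q s a = γ a ∧ q s b = γ b) →
      deriv (fun s => ∫ t in a..b,
          (C (q s t) (qvel Ψ q s t)
            + ∑ σ ∈ Finset.univ.filter (fun σ : Fin n => (σ : ℕ) < m),
                μ σ t * qvel Ψ q s t σ)) 0 = 0 := by
  intro q hq hq0 hqb
  classical
  have hHc : ContDiff ℝ 1 (BH.Hh m Ψ C μ q) := BH.Hh_contDiff hq hΨ hC hμ
  -- the integrand of the goal is `Hh`
  have hfun : (fun s => ∫ t in a..b,
      (C (q s t) (qvel Ψ q s t)
        + ∑ σ ∈ Finset.univ.filter (fun σ : Fin n => (σ : ℕ) < m),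
            μ σ t * qvel Ψ q s t σ))
      = fun s => ∫ t in a..b, BH.Hh m Ψ C μ q (s, t) := by
    funext s
    congr 1
    funext t
    simp only [BH.Hh, BH.qvel_eq hq s t]
  -- differentiation under the integral sign
  have hDI : HasDerivAt (fun s => ∫ t in a..b, BH.Hh m Ψ C μ q (s, t))
      (∫ t in a..b, fderiv ℝ (BH.Hh m Ψ C μ q) (0, t) (1, 0)) 0 :=
    hasDerivAt_intervalIntegral_of_contDiff hHc a b
  -- abbreviation for the first-variation density
  set Fp : ℝ → ℝ := fun t => fderiv ℝ (BH.Hh m Ψ C μ q) (0, t) (1, 0) with hFp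
  -- the boundary function
  set Bf : ℝ → ℝ := fun t => ∑ j : Fin n,
      (if (j : ℕ) < m then μ j t else pder (C (γ t)) (cvel Ψ γ t) j)
        * (∑ i : Fin n, Ψ (γ t) j i * BH.sd q i (0, t)) with hBf
  -- the crucial pointwise identity
  have hBd : ∀ t, HasDerivAt Bf (Fp t) t := by
    intro t
    have hx0 : q 0 t = γ t := hq0 t
    set x : Fin n → ℝ := γ t with hxdef
    set xv : Fin n → ℝ := cvel Ψ γ t with hxvdef
    set gam' : Fin n → ℝ := fun k => deriv (fun t' => γ t' k) t with hgam
    set δ : Fin n → ℝ := fun i => BH.sd q i (0, t) with hδdef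
    set mdv : Fin n → ℝ := fun i => BH.md q i (0, t) with hmdvdef
    set P : Fin n → Fin n → Fin n → ℝ := fun j i k => pder (fun y => Ψ y j i) x k with hPdef
    set Pq : Fin n → ℝ := fun i => pder (fun y => C y xv) x i with hPqdef
    set Pu : Fin n → ℝ := fun j => pder (C x) xv j with hPudef
    set c' : Fin n → ℝ := fun j => if (j : ℕ) < m then deriv (μ j) t
      else deriv (fun t' => pder (C (γ t')) (cvel Ψ γ t') j) t with hc'def
    set w : Fin n → ℝ :=
      fun j => ∑ i, ((∑ k, P j i k * δ k) * gam' i + Ψ x j i * mdv i) with hwdef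
    set Θ : Fin n → ℝ :=
      fun j => ∑ i, ((∑ k, P j i k * gam' k) * δ i + Ψ x j i * mdv i) with hΘdef
    -- ∂q/∂t at s = 0 equals γ̇
    have hvd0 : ∀ (t' : ℝ) (i : Fin n), BH.vd q i (0, t') = deriv (fun u => γ u i) t' := by
      intro t' i
      rw [← BH.vd_eq hq 0 t' i]
      congr 1
      funext u
      rw [hq0 u]
    -- quasi-velocity at s = 0 equals cvel
    have hU0 : ∀ t' : ℝ, BH.Uu Ψ q (0, t') = cvel Ψ γ t' := by
      intro t'
      funext j
      show (∑ i, Ψ (q 0 t') j i * BH.vd q i (0, t')) = _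
      rw [hq0 t']
      exact Finset.sum_congr rfl fun i _ => by rw [hvd0 t' i]
    -- derivative of γ
    have hγd : HasDerivAt γ gam' t :=
      hasDerivAt_pi.mpr fun i => ((contDiff_pi.mp hγ i).differentiable two_ne_zero t).hasDerivAt
    -- derivative of s ↦ q s t
    have hqd : HasDerivAt (fun s => q s t) δ 0 := BH.q_hasDerivAt_s hq 0 t
    -- derivative of s ↦ Ψ (q s t) j i
    have hΨd : ∀ j i : Fin n,
        HasDerivAt (fun s => Ψ (q s t) j i) (∑ k, P j i k * δ k) 0 := by
      intro j i
      have h := hasDerivAt_comp_pi (g := fun y => Ψ y j i) (X := fun s => q s t)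
        (x₀ := (0:ℝ)) (((hΨ j i).differentiable (by simp)) (q 0 t)) hqd
      have hval : (∑ k, δ k * pder (fun y => Ψ y j i) (q 0 t) k) = ∑ k, P j i k * δ k := by
        rw [hx0]
        exact Finset.sum_congr rfl fun k _ => mul_comm _ _
      rwa [hval] at h
    -- derivative of s ↦ ∂q^i/∂t
    have hvds : ∀ i : Fin n, HasDerivAt (fun s => BH.vd q i (s, t)) (mdv i) 0 :=
      fun i => BH.vd_hasDerivAt_s hq 0 t i
    -- derivative of the quasi-velocities in s
    have hUd : ∀ j : Fin n, HasDerivAt (fun s => BH.Uu Ψ q (s, t) j) (w j) 0 := by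
      intro j
      have h : HasDerivAt (fun s => ∑ i, Ψ (q s t) j i * BH.vd q i (s, t))
          (∑ i, ((∑ k, P j i k * δ k) * BH.vd q i (0, t) + Ψ (q 0 t) j i * mdv i)) 0 :=
        HasDerivAt.fun_sum fun i _ => (hΨd j i).mul (hvds i)
      have hval : (∑ i, ((∑ k, P j i k * δ k) * BH.vd q i (0, t) + Ψ (q 0 t) j i * mdv i))
          = w j := by
        apply Finset.sum_congr rfl
        intro i _
        rw [hvd0 t i, hx0]
      rw [hval] at h
      exact h
    -- derivative of the C-term
    have hCfd : DifferentiableAt ℝ (fun p : (Fin n → ℝ) × (Fin n → ℝ) => C p.1 p.2) (x, xv) :=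
      (hC.differentiable two_ne_zero) (x, xv)
    have hCd : HasDerivAt (fun s => C (q s t) (BH.Uu Ψ q (s, t)))
        ((∑ i, δ i * Pq i) + ∑ j, w j * Pu j) 0 := by
      have hXU : HasDerivAt (fun s => ((q s t, BH.Uu Ψ q (s, t)) : (Fin n → ℝ) × (Fin n → ℝ)))
          ((δ, w) : (Fin n → ℝ) × (Fin n → ℝ)) 0 :=
        hqd.prodMk (hasDerivAt_pi.mpr hUd)
      have hpt : ((q 0 t, BH.Uu Ψ q (0, t)) : (Fin n → ℝ) × (Fin n → ℝ)) = (x, xv) := by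
        rw [hx0, hU0 t]
      have hCfd0 : DifferentiableAt ℝ (fun p : (Fin n → ℝ) × (Fin n → ℝ) => C p.1 p.2)
          (q 0 t, BH.Uu Ψ q (0, t)) := (hC.differentiable two_ne_zero) _
      have h := hCfd0.hasFDerivAt.comp_hasDerivAt 0 hXU
      rw [hpt] at h
      have hexp : fderiv ℝ (fun p : (Fin n → ℝ) × (Fin n → ℝ) => C p.1 p.2) (x, xv) (δ, w)
          = (∑ i, δ i * Pq i) + ∑ j, w j * Pu j := by
        rw [prod_clm_apply]
        congr 1
        · exact Finset.sum_congr rfl fun i _ => by simp only [hPqdef]; rw [pder_fst hCfd i]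
        · exact Finset.sum_congr rfl fun j _ => by simp only [hPudef]; rw [pder_snd hCfd j]
      rw [hexp] at h
      exact h
    -- derivative of the multiplier term
    have hμd : HasDerivAt
        (fun s => ∑ σ ∈ Finset.univ.filter (fun σ : Fin n => (σ : ℕ) < m),
          μ σ t * BH.Uu Ψ q (s, t) σ)
        (∑ σ ∈ Finset.univ.filter (fun σ : Fin n => (σ : ℕ) < m), μ σ t * w σ) 0 :=
      HasDerivAt.fun_sum fun σ _ => (hUd σ).const_mul (μ σ t)
    -- total s-derivative of the integrand
    have hHs : HasDerivAt (fun s => BH.Hh m Ψ C μ q (s, t))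
        ((∑ i, δ i * Pq i) + (∑ j, w j * Pu j)
          + ∑ σ ∈ Finset.univ.filter (fun σ : Fin n => (σ : ℕ) < m), μ σ t * w σ) 0 :=
      hCd.add hμd
    have hFpt : Fp t = (∑ i, δ i * Pq i) + (∑ j, w j * Pu j)
        + ∑ σ ∈ Finset.univ.filter (fun σ : Fin n => (σ : ℕ) < m), μ σ t * w σ :=
      (hasDerivAt_slice_s (hHc.differentiable one_ne_zero (0, t))).unique hHs
    -- t-derivative of the quasi-variations θ
    have hθd : ∀ j : Fin n,
        HasDerivAt (fun t' => ∑ i, Ψ (γ t') j i * BH.sd q i (0, t')) (Θ j) t := by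
      intro j
      have h : HasDerivAt (fun t' => ∑ i, Ψ (γ t') j i * BH.sd q i (0, t'))
          (∑ i, ((∑ k, gam' k * pder (fun y => Ψ y j i) (γ t) k) * BH.sd q i (0, t)
            + Ψ (γ t) j i * BH.md q i (0, t))) t :=
        HasDerivAt.fun_sum fun i _ =>
          (hasDerivAt_comp_pi (((hΨ j i).differentiable (by simp)) (γ t)) hγd).mul
            (BH.sd_hasDerivAt_t hq 0 t i)
      have hval : (∑ i, ((∑ k, gam' k * pder (fun y => Ψ y j i) (γ t) k) * BH.sd q i (0, t)
            + Ψ (γ t) j i * BH.md q i (0, t))) = Θ j := by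
        apply Finset.sum_congr rfl
        intro i _
        have : (∑ k, gam' k * pder (fun y => Ψ y j i) (γ t) k) = ∑ k, P j i k * gam' k :=
          Finset.sum_congr rfl fun k _ => mul_comm _ _
        rw [this]
      rw [hval] at h
      exact h
    -- t-derivative of the coefficients c
    have hcvel : ContDiff ℝ 1 (cvel Ψ γ) := by
      apply contDiff_pi.mpr
      intro jj
      apply ContDiff.sum
      intro i _
      apply ContDiff.mul
      · exact ((hΨ jj i).of_le (by simp)).comp (hγ.of_le one_le_two)
      · have h1 : ContDiff ℝ 1 (fun u => fderiv ℝ (fun v => γ v i) u 1) :=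
          ((contDiff_pi.mp hγ i).fderiv_right (le_refl 2)).clm_apply contDiff_const
        exact h1
    have hccd : ∀ j : Fin n, HasDerivAt
        (fun t' => if (j : ℕ) < m then μ j t' else pder (C (γ t')) (cvel Ψ γ t') j) (c' j) t := by
      intro j
      by_cases hj : (j : ℕ) < m
      · simp only [if_pos hj, hc'def]
        exact ((hμ j).differentiable one_ne_zero t).hasDerivAt
      · simp only [if_neg hj, hc'def]
        have heq : (fun t' => pder (C (γ t')) (cvel Ψ γ t') j)
            = fun t' => fderiv ℝ (fun p : (Fin n → ℝ) × (Fin n → ℝ) => C p.1 p.2)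
                (γ t', cvel Ψ γ t') (0, Pi.single j 1) := by
          funext t'
          exact pder_snd ((hC.differentiable two_ne_zero) _) j
        have hdiff : DifferentiableAt ℝ (fun t' => pder (C (γ t')) (cvel Ψ γ t') j) t := by
          rw [heq]
          have : ContDiff ℝ 1 (fun t' => fderiv ℝ
              (fun p : (Fin n → ℝ) × (Fin n → ℝ) => C p.1 p.2)
              (γ t', cvel Ψ γ t') (0, Pi.single j 1)) :=
            ((hC.fderiv_right (le_refl 2)).comp
              ((hγ.of_le one_le_two).prodMk hcvel)).clm_apply contDiff_const
          exact (this.differentiable one_ne_zero) t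
        exact hdiff.hasDerivAt
    -- t-derivative of Bf
    have hBt : HasDerivAt Bf
        (∑ j : Fin n, (c' j * (∑ i, Ψ x j i * δ i)
          + (if (j : ℕ) < m then μ j t else pder (C x) xv j) * Θ j)) t :=
      HasDerivAt.fun_sum fun j _ => (hccd j).mul (hθd j)
    -- the algebraic identity
    have hham : ∀ j p r : Fin n, hamel Ψ Φ x j p r
        = ∑ i, ∑ k, (P j i k - P j k i) * Φ x i p * Φ x k r := fun j p r => rfl
    have hγ' : ∀ i : Fin n, gam' i
        = ∑ S ∈ Finset.univ.filter (fun S : Fin n => m ≤ (S : ℕ)), Φ x i S * xv S :=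
      fun i => hiii t i
    have hPu0 : ∀ σ : Fin n, (σ : ℕ) < m → Pu σ = 0 := fun σ hσ => hCu x xv σ hσ
    have hI' : ∀ I : Fin n, m ≤ (I : ℕ) →
        c' I - (∑ j, Pq j * Φ x j I)
          - (∑ J ∈ Finset.univ.filter (fun J : Fin n => m ≤ (J : ℕ)),
              ∑ S ∈ Finset.univ.filter (fun S : Fin n => m ≤ (S : ℕ)),
              Pu J * hamel Ψ Φ x J S I * xv S)
        = ∑ τ ∈ Finset.univ.filter (fun τ : Fin n => (τ : ℕ) < m),
            ∑ S ∈ Finset.univ.filter (fun S : Fin n => m ≤ (S : ℕ)),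
            μ τ t * hamel Ψ Φ x τ S I * xv S := by
      intro I hI0
      have h := hi t I hI0
      simp only [hc'def, if_neg (not_lt.mpr hI0)]
      exact h
    have hII' : ∀ σ : Fin n, (σ : ℕ) < m →
        - (∑ j, Pq j * Φ x j σ)
          - (∑ J ∈ Finset.univ.filter (fun J : Fin n => m ≤ (J : ℕ)),
              ∑ S ∈ Finset.univ.filter (fun S : Fin n => m ≤ (S : ℕ)),
              Pu J * hamel Ψ Φ x J S σ * xv S)
        = - c' σ + ∑ τ ∈ Finset.univ.filter (fun τ : Fin n => (τ : ℕ) < m),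
            ∑ S ∈ Finset.univ.filter (fun S : Fin n => m ≤ (S : ℕ)),
            μ τ t * hamel Ψ Φ x τ S σ * xv S := by
      intro σ hσ
      have h := hii t σ hσ
      simp only [hc'def, if_pos hσ]
      exact h
    have halg := alg (m := m) (Ψ x) (Φ x) (hΦ x).2 P (hamel Ψ Φ x) hham
      xv δ gam' Pq Pu (fun τ => μ τ t) c' mdv hγ' hPu0 hI' hII'
    rw [hFpt]
    rw [halg]
    exact hBt
  -- endpoints
  have hsd_zero : ∀ t₀ : ℝ, (∀ s, q s t₀ = γ t₀) → ∀ i, BH.sd q i (0, t₀) = 0 := by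
    intro t₀ hconst i
    rw [← BH.sd_eq hq 0 t₀ i]
    have : (fun s' => q s' t₀ i) = fun _ => γ t₀ i := by
      funext s'
      rw [hconst s']
    rw [this, deriv_const]
  have hBa : Bf a = 0 := by
    have := hsd_zero a (fun s => (hqb s).1)
    simp [hBf, this]
  have hBb : Bf b = 0 := by
    have := hsd_zero b (fun s => (hqb s).2)
    simp [hBf, this]
  -- FTC
  have hFpc : Continuous Fp := by
    have : Continuous (fun p : ℝ × ℝ => fderiv ℝ (BH.Hh m Ψ C μ q) p (1, 0)) :=
      (ContinuousLinearMap.apply ℝ ℝ ((1:ℝ), (0:ℝ))).continuous.comp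
        (hHc.continuous_fderiv one_ne_zero)
    exact this.comp (continuous_const.prodMk continuous_id)
  have hFTC : ∫ t in a..b, Fp t = Bf b - Bf a :=
    intervalIntegral.integral_eq_sub_of_hasDerivAt (fun t _ => hBd t)
      (hFpc.intervalIntegrable a b)
  rw [hfun, hDI.deriv, hFTC, hBa, hBb]
  ring

end
end

section
/- Spherical reduction of the rigid-body optimal control equations: Suppose I_xx = I_yy = I_zz = I > 0 (so η₃₂ = η₁₃ = η₂₁ = 0, 𝕀 = I·Id, Π = Iω). Then for any C³ curve ω : ℝ → ℝ³, the vector expression κ = Π × Π̇ + Π × (ω × Π) − Π̈ − 𝕀 · ( 2 ω × Π̇ + ω̇ × Π + ω × (ω × Π) ) reduces to κ = −Π̈ = −I ω̈, the quantity λ = κ + Π̈ vanishes identically, and the equation κ̇ = κ × ω is equivalent to ω⃛ = ω̈ × ω. -/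
open Matrix Real

noncomputable section

/-!
For an isotropic body `Π = I ω`, and every term of `κ` other than `-Π̈` is a multiple of
`ω × ω̇`, `ω̇ × ω` or `ω × ω = 0`; these cancel by antisymmetry of `×`, leaving `κ = -I ω̈`.
Since `I ≠ 0`, the equation `κ̇ = κ × ω`, i.e. `-I ω⃛ = -I (ω̈ × ω)`, is `ω⃛ = ω̈ × ω`.
-/

lemma deriv_const_smul_eq_smul_deriv {𝕜 F : Type*} [NontriviallyNormedField 𝕜]
    [NormedAddCommGroup F] [NormedSpace 𝕜 F] (c : 𝕜) (f : 𝕜 → F) :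
    deriv (c • f) = c • deriv f :=
  funext fun _ => deriv_const_smul_field c f

lemma gyroscopic_terms_eq_zero_of_isotropic {R : Type*} [CommRing R] (c : R) (w w' : Fin 3 → R) :
    (c • w) ⨯₃ (c • w') + (c • w) ⨯₃ (w ⨯₃ (c • w))
      - c • ((2 : R) • (w ⨯₃ (c • w')) + w' ⨯₃ (c • w) + w ⨯₃ (w ⨯₃ (c • w))) = 0 := by
  simp only [map_smul, LinearMap.smul_apply, cross_self, smul_zero, ← cross_anticomm w' w]
  module

theorem spherical_rigid_body_reduction_general (I : ℝ) (hI : 0 < I)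
    (ω : ℝ → Fin 3 → ℝ)
    (Pm : ℝ → Fin 3 → ℝ)
    (hPm : ∀ t, Pm t = Matrix.diagonal ![I, I, I] *ᵥ ω t)
    (κ : ℝ → Fin 3 → ℝ)
    (hκ : ∀ t, κ t
      = Pm t ⨯₃ deriv Pm t + Pm t ⨯₃ (ω t ⨯₃ Pm t) - deriv (deriv Pm) t
        - Matrix.diagonal ![I, I, I] *ᵥ
            ((2 : ℝ) • (ω t ⨯₃ deriv Pm t) + deriv ω t ⨯₃ Pm t + ω t ⨯₃ (ω t ⨯₃ Pm t)))
    (lam : ℝ → Fin 3 → ℝ)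
    (hlam : ∀ t, lam t = κ t + deriv (deriv Pm) t) :
    (∀ t, κ t = -deriv (deriv Pm) t ∧ κ t = -(I • deriv (deriv ω) t)) ∧
    (∀ t, lam t = 0) ∧
    ((∀ t, deriv κ t = κ t ⨯₃ ω t) ↔
      (∀ t, deriv (deriv (deriv ω)) t = deriv (deriv ω) t ⨯₃ ω t)) := by
  have h𝕀 : ![I, I, I] = fun _ => I := by ext i; fin_cases i <;> rfl
  simp only [h𝕀, diagonal_const_mulVec] at hPm hκ
  have hP : Pm = I • ω := funext hPm
  have hP' : deriv Pm = I • deriv ω := by rw [hP, deriv_const_smul_eq_smul_deriv]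
  have hP'' : deriv (deriv Pm) = I • deriv (deriv ω) := by
    rw [hP', deriv_const_smul_eq_smul_deriv]
  have hκω : ∀ t, κ t = -(I • deriv (deriv ω) t) := fun t => by
    rw [hκ t, hP'', hP', hP, sub_right_comm]
    simp only [Pi.smul_apply, gyroscopic_terms_eq_zero_of_isotropic, zero_sub]
  have hκP : ∀ t, κ t = -deriv (deriv Pm) t := fun t => by rw [hκω, hP'']; rfl
  have hκ' : ∀ t, deriv κ t = -(I • deriv (deriv (deriv ω)) t) := fun t => by
    rw [funext hκω, deriv.fun_neg, deriv_fun_const_smul_field]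
  refine ⟨fun t => ⟨hκP t, hκω t⟩, fun t => by rw [hlam, hκP, neg_add_cancel], ?_⟩
  refine forall_congr' fun t => ?_
  rw [hκ', hκω]
  simp only [map_neg, map_smul, LinearMap.neg_apply, LinearMap.smul_apply, neg_inj,
    smul_right_inj hI.ne']

/-- **Spherical reduction of the rigid-body optimal control equations.**
If `I_xx = I_yy = I_zz = I > 0` (so `𝕀 = I·Id`, `Π = Iω`), then the κ-vector
`κ = Π × Π̇ + Π × (ω × Π) − Π̈ − 𝕀·(2 ω × Π̇ + ω̇ × Π + ω × (ω × Π))`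
reduces to `κ = −Π̈ = −I ω̈`, the quantity `λ = κ + Π̈` vanishes identically,
and `κ̇ = κ × ω` is equivalent to `ω⃛ = ω̈ × ω`. -/
theorem spherical_rigid_body_reduction (I : ℝ) (hI : 0 < I)
    (ω : ℝ → Fin 3 → ℝ) (hω : ContDiff ℝ 3 ω)
    (Pm : ℝ → Fin 3 → ℝ)
    (hPm : ∀ t, Pm t = Matrix.diagonal ![I, I, I] *ᵥ ω t)
    (κ : ℝ → Fin 3 → ℝ)
    (hκ : ∀ t, κ t
      = Pm t ⨯₃ deriv Pm t + Pm t ⨯₃ (ω t ⨯₃ Pm t) - deriv (deriv Pm) t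
        - Matrix.diagonal ![I, I, I] *ᵥ
            ((2 : ℝ) • (ω t ⨯₃ deriv Pm t) + deriv ω t ⨯₃ Pm t + ω t ⨯₃ (ω t ⨯₃ Pm t)))
    (lam : ℝ → Fin 3 → ℝ)
    (hlam : ∀ t, lam t = κ t + deriv (deriv Pm) t) :
    (∀ t, κ t = -deriv (deriv Pm) t ∧ κ t = -(I • deriv (deriv ω) t)) ∧
    (∀ t, lam t = 0) ∧
    ((∀ t, deriv κ t = κ t ⨯₃ ω t) ↔
      (∀ t, deriv (deriv (deriv ω)) t = deriv (deriv ω) t ⨯₃ ω t)) :=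
  spherical_rigid_body_reduction_general I hI ω Pm hPm κ hκ lam hlam
end
end
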